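/- arXiv:1407.2801 — 7 statements merged into one kernel-verified Lean document; each statement's English description precedes it below -/
import Mathlib

section
/- Let n ≥ 1, let A be an n×n Robinson similarity matrix, and let Δ be an integer with 1 ≤ Δ ≤ n−1. Then for every permutation π of [n] one has ⟨A_π, B^Δ_n⟩ ≥ ⟨A, B^Δ_n⟩; that is, the identity permutation is optimal for QAP(A, B^Δ_n). -/
/-- `A` is a Robinson similarity matrix: it is symmetric and its entries decrease
monotonically in rows and columns when moving away from the main diagonal, i.e.
`A i k ≤ min (A i j) (A j k)` for all `i ≤ j ≤ k`. -/
def IsRobinsonSim {n : ℕ} (A : Matrix (Fin n) (Fin n) ℝ) : Prop :=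
  (∀ i j, A i j = A j i) ∧
  ∀ i j k : Fin n, i ≤ j → j ≤ k → A i k ≤ min (A i j) (A j k)

/-- `B` is a Robinson dissimilarity matrix: it is symmetric and
`max (B i j) (B j k) ≤ B i k` for all `i ≤ j ≤ k`. -/
def IsRobinsonDissim {n : ℕ} (B : Matrix (Fin n) (Fin n) ℝ) : Prop :=
  (∀ i j, B i j = B j i) ∧
  ∀ i j k : Fin n, i ≤ j → j ≤ k → max (B i j) (B j k) ≤ B i k

/-- `A` is a Toeplitz matrix: `A i j = A (i+1) (j+1)` whenever the indices make sense. -/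
def IsToeplitz {n : ℕ} (A : Matrix (Fin n) (Fin n) ℝ) : Prop :=
  ∀ (i j : Fin n) (hi : i.val + 1 < n) (hj : j.val + 1 < n),
    A i j = A ⟨i.val + 1, hi⟩ ⟨j.val + 1, hj⟩

/-- The matrix `A_π` with entries `(A_π) i j = A (π i) (π j)`. -/
def permMat {n : ℕ} (A : Matrix (Fin n) (Fin n) ℝ) (π : Equiv.Perm (Fin n)) :
    Matrix (Fin n) (Fin n) ℝ :=
  Matrix.of fun i j => A (π i) (π j)

/-- The trace inner product `⟨A,B⟩ = ∑_{i,j} A i j * B i j`. -/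
def mInner {n : ℕ} (A B : Matrix (Fin n) (Fin n) ℝ) : ℝ :=
  ∑ i, ∑ j, A i j * B i j

/-- The 0/1 Toeplitz Robinson dissimilarity matrix `B^Δ_n`, with `(i,j)` entry `1`
iff `|i - j| ≥ n - Δ` (indices thought of as `1,…,n`, here `0`-based). -/
def BDelta (n Δ : ℕ) : Matrix (Fin n) (Fin n) ℝ :=
  Matrix.of fun i j => if (n : ℤ) - (Δ : ℤ) ≤ |(i.val : ℤ) - (j.val : ℤ)| then 1 else 0

/-- The set `E^Δ_n` of (unordered, represented here with first coordinate smaller)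
upper-triangular support positions of `B^Δ_n`: the pairs `(i,j)` with `i < j` and
`j - i ≥ n - Δ`, i.e. `i + (n - Δ) ≤ j`. -/
def EDelta (n Δ : ℕ) : Finset (Fin n × Fin n) :=
  Finset.univ.filter (fun p => p.1.val + (n - Δ) ≤ p.2.val)

/-!
Both sides equal twice a sum over the far pairs `i + m ≤ j` of `{0, …, n - 1}`, where
`m = n - Δ ≥ 1`, and the inequality is proved by induction on `n`. Delete the position `c` that
the permutation sends to the last vertex `n`. On the permuted side this removes `n + 1 - m` pairs:
the far pairs through `c` and the pairs of length `m` straddling `c`. Each dominates, by the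
Robinson property, the pair joining its smaller vertex `v` to `n`, and these vertices `v < n` are
distinct. As `A v n` increases with `v ≤ n`, the removed pairs weigh at least
`∑_{v ≤ n - m} A v n`, which is exactly the weight of the far pairs through `n` on the identity
side.
-/

open Finset

def IsRobinson (f : ℕ → ℕ → ℝ) : Prop :=
  ∀ ⦃a' a b b'⦄, a' ≤ a → a ≤ b → b ≤ b' → f a' b' ≤ f a b

def farSum (m n : ℕ) (f : ℕ → ℕ → ℝ) : ℝ :=
  ∑ i ∈ range n, ∑ j ∈ Ico (i + m) n, f i j

def succAbove (c x : ℕ) : ℕ := if x < c then x else x + 1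

theorem farSum_succ (m n : ℕ) (f : ℕ → ℕ → ℝ) :
    farSum m (n + 1) f = farSum m n f + ∑ i ∈ range (n + 1 - m), f i n := by
  have hrow : ∀ i, ∑ j ∈ Ico (i + m) (n + 1), f i j
      = ∑ j ∈ Ico (i + m) n, f i j + if i + m ≤ n then f i n else 0 := by
    intro i
    split_ifs with h
    · exact sum_Ico_succ_top h _
    · rw [Ico_eq_empty (by omega), Ico_eq_empty (by omega)]; simp
  have hcol : (range (n + 1)).filter (fun i => i + m ≤ n) = range (n + 1 - m) := by
    ext i; simp only [mem_filter, mem_range]; omega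
  simp only [farSum, hrow, sum_add_distrib, ← sum_filter, hcol]
  rw [sum_range_succ, Ico_eq_empty (by omega), sum_empty, add_zero]

theorem sum_range_succAbove (φ : ℕ → ℝ) (c K : ℕ) :
    ∑ i ∈ range K, φ (succAbove c i) + φ (min c K) = ∑ i ∈ range (K + 1), φ i := by
  induction K with
  | zero => simp
  | succ K ih =>
    rw [sum_range_succ (fun i => φ (succAbove c i)), sum_range_succ φ (K + 1), ← ih]
    by_cases h : K < c
    · rw [succAbove, if_pos h, min_eq_right (by omega), min_eq_right h.le]
    · rw [succAbove, if_neg h, min_eq_left (by omega), min_eq_left (by omega)]; ring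

/-- Deleting `c` from `{0, …, n}` loses the far pairs through `c` and those of length exactly `m`
straddling `c`; listed by their left end `a`, these are the pairs `(min a c, max (a + m) c)`. -/
theorem farSum_succ_eq_succAbove (m : ℕ) (F : ℕ → ℕ → ℝ) {c n : ℕ} (hc : c ≤ n) :
    farSum m (n + 1) F = farSum m n (fun a b => F (succAbove c a) (succAbove c b)) +
      ∑ a ∈ range (n + 1 - m), F (min a c) (max (a + m) c) := by
  induction n, hc using Nat.le_induction with
  | base =>
    rw [farSum_succ]
    congr 1
    · refine sum_congr rfl fun i hi => sum_congr rfl fun j hj => ?_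
      simp only [mem_range, mem_Ico] at hi hj
      simp only [succAbove, if_pos hi, if_pos hj.2]
    · refine sum_congr rfl fun a ha => ?_
      simp only [mem_range] at ha
      rw [min_eq_left (by omega), max_eq_right (by omega)]
  | succ n hcn ih =>
    have hn : succAbove c n = n + 1 := if_neg (by omega)
    rw [farSum_succ, ih, farSum_succ m n, hn]
    rcases le_or_gt m (n + 1) with h | h
    · rw [show n + 1 + 1 - m = n + 1 - m + 1 by omega,
        sum_range_succ (fun a => F (min a c) (max (a + m) c)),
        ← sum_range_succAbove (fun i => F i (n + 1)) c, max_eq_left (by omega),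
        show n + 1 - m + m = n + 1 by omega, min_comm]
      ring
    · simp [show n + 1 + 1 - m = 0 by omega, show n + 1 - m = 0 by omega]

theorem sum_range_card_le_sum {φ : ℕ → ℝ} {N : ℕ} (hφ : MonotoneOn φ (Set.Iic N))
    (s : Finset ℕ) (hs : ∀ x ∈ s, x ≤ N) :
    ∑ i ∈ range #s, φ i ≤ ∑ x ∈ s, φ x := by
  induction s using induction_on_max with
  | empty => simp
  | insert a s hlt ih =>
    have ha : a ∉ s := fun h => (hlt a h).false
    have hcard : #s ≤ a := by simpa using card_le_card (fun x hx => mem_range.2 (hlt x hx))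
    have haN : a ≤ N := hs a (mem_insert_self a s)
    rw [card_insert_of_notMem ha, sum_range_succ, sum_insert ha, add_comm (φ a)]
    exact add_le_add (ih fun x hx => hs x (mem_insert_of_mem hx))
      (hφ (show #s ≤ N by omega) haN hcard)

theorem sum_range_le_sum_comp {φ : ℕ → ℝ} {N K : ℕ} (hφ : MonotoneOn φ (Set.Iic N))
    {w : ℕ → ℕ} (hw : Set.InjOn w (range K)) (hwN : ∀ a < K, w a ≤ N) :
    ∑ a ∈ range K, φ a ≤ ∑ a ∈ range K, φ (w a) := by
  have hcard : #((range K).image w) = K := by rw [card_image_of_injOn hw, card_range]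
  calc ∑ a ∈ range K, φ a = ∑ a ∈ range #((range K).image w), φ a := by rw [hcard]
    _ ≤ ∑ x ∈ (range K).image w, φ x :=
      sum_range_card_le_sum hφ _ (by simpa using hwN)
    _ = ∑ a ∈ range K, φ (w a) := sum_image hw

theorem IsRobinson.apply_min_le {f : ℕ → ℕ → ℝ} (hf : IsRobinson f)
    (hsymm : ∀ a b, f a b = f b a) {x y N : ℕ} (hx : x ≤ N) (hy : y ≤ N) :
    f (min x y) N ≤ f x y := by
  rcases le_total x y with h | h
  · rw [min_eq_left h]; exact hf le_rfl h hy
  · rw [min_eq_right h, hsymm x]; exact hf le_rfl h hx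

theorem succAbove_injective (c : ℕ) : Function.Injective (succAbove c) := by
  intro x y h
  unfold succAbove at h
  split_ifs at h <;> omega

theorem succAbove_ne (c x : ℕ) : succAbove c x ≠ c := by
  unfold succAbove; split_ifs <;> omega

theorem succAbove_lt_succ (c : ℕ) {x n : ℕ} (hx : x < n) : succAbove c x < n + 1 := by
  unfold succAbove; split_ifs <;> omega

section RemoveTop

variable {n c : ℕ} {g : ℕ → ℕ}

theorem apply_lt_of_ne (hmaps : Set.MapsTo g (Set.Iio (n + 1)) (Set.Iio (n + 1)))
    (hinj : Set.InjOn g (Set.Iio (n + 1))) (hc : c ≤ n) (hgc : g c = n) {q : ℕ} (hq : q ≤ n)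
    (hqc : q ≠ c) : g q < n :=
  lt_of_le_of_ne (Nat.lt_succ_iff.1 (hmaps (Nat.lt_succ_of_le hq)))
    fun h => hqc (hinj (Nat.lt_succ_of_le hq) (Nat.lt_succ_of_le hc) (h.trans hgc.symm))

theorem mapsTo_comp_succAbove (hmaps : Set.MapsTo g (Set.Iio (n + 1)) (Set.Iio (n + 1)))
    (hinj : Set.InjOn g (Set.Iio (n + 1))) (hc : c ≤ n) (hgc : g c = n) :
    Set.MapsTo (fun i => g (succAbove c i)) (Set.Iio n) (Set.Iio n) := fun _ hi =>
  apply_lt_of_ne hmaps hinj hc hgc (Nat.lt_succ_iff.1 (succAbove_lt_succ c hi)) (succAbove_ne c _)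

theorem injOn_comp_succAbove (hinj : Set.InjOn g (Set.Iio (n + 1))) :
    Set.InjOn (fun i => g (succAbove c i)) (Set.Iio n) := fun _ hi _ hj h =>
  succAbove_injective c (hinj (succAbove_lt_succ c hi) (succAbove_lt_succ c hj) h)

theorem exists_endpoint_ne_apply_eq_min {m : ℕ} (hm : 1 ≤ m)
    (hmaps : Set.MapsTo g (Set.Iio (n + 1)) (Set.Iio (n + 1)))
    (hinj : Set.InjOn g (Set.Iio (n + 1))) (hc : c ≤ n) (hgc : g c = n) {a : ℕ}
    (ha : a < n + 1 - m) :
    ∃ p, (p = min a c ∨ p = max (a + m) c) ∧ p ≠ c ∧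
      g p = min (g (min a c)) (g (max (a + m) c)) := by
  rcases min_choice (g (min a c)) (g (max (a + m) c)) with h | h
  · refine ⟨min a c, Or.inl rfl, fun hac => ?_, h.symm⟩
    have := apply_lt_of_ne hmaps hinj hc hgc (q := max (a + m) c) (by omega) (by omega)
    have := min_le_right (g (min a c)) (g (max (a + m) c))
    rw [hac, hgc] at h
    omega
  · refine ⟨max (a + m) c, Or.inr rfl, fun hac => ?_, h.symm⟩
    have := apply_lt_of_ne hmaps hinj hc hgc (q := min a c) (by omega) (by omega)
    have := min_le_left (g (min a c)) (g (max (a + m) c))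
    rw [hac, hgc] at h
    omega

theorem injOn_min_endpoints {m : ℕ} (hm : 1 ≤ m)
    (hmaps : Set.MapsTo g (Set.Iio (n + 1)) (Set.Iio (n + 1)))
    (hinj : Set.InjOn g (Set.Iio (n + 1))) (hc : c ≤ n) (hgc : g c = n) :
    Set.InjOn (fun a => min (g (min a c)) (g (max (a + m) c))) (range (n + 1 - m)) := by
  intro a ha b hb hab
  simp only [coe_range, Set.mem_Iio] at ha hb
  obtain ⟨p, hp, hpc, hgp⟩ := exists_endpoint_ne_apply_eq_min hm hmaps hinj hc hgc ha
  obtain ⟨q, hq, hqc, hgq⟩ := exists_endpoint_ne_apply_eq_min hm hmaps hinj hc hgc hb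
  have hpq : p = q := hinj (show p < n + 1 by omega) (show q < n + 1 by omega)
    (hgp.trans (hab.trans hgq.symm))
  omega

end RemoveTop

theorem farSum_le_farSum_comp {m : ℕ} (hm : 1 ≤ m) {f : ℕ → ℕ → ℝ}
    (hsymm : ∀ a b, f a b = f b a) (hf : IsRobinson f) {n : ℕ} {g : ℕ → ℕ}
    (hmaps : Set.MapsTo g (Set.Iio n) (Set.Iio n)) (hinj : Set.InjOn g (Set.Iio n)) :
    farSum m n f ≤ farSum m n (fun a b => f (g a) (g b)) := by
  induction n generalizing g with
  | zero => simp [farSum]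
  | succ n ih =>
    obtain ⟨c, hcn, hgc⟩ : ∃ c < n + 1, g c = n :=
      ((Set.finite_Iio _).injOn_iff_bijOn_of_mapsTo hmaps).1 hinj |>.surjOn (by simp)
    have hc : c ≤ n := Nat.lt_succ_iff.1 hcn
    have hg : ∀ {x}, x ≤ n → g x ≤ n := fun hx =>
      Nat.lt_succ_iff.1 (hmaps (Nat.lt_succ_of_le hx))
    calc farSum m (n + 1) f = farSum m n f + ∑ a ∈ range (n + 1 - m), f a n := farSum_succ m n f
      _ ≤ farSum m n (fun a b => f (g (succAbove c a)) (g (succAbove c b))) +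
          ∑ a ∈ range (n + 1 - m), f (min (g (min a c)) (g (max (a + m) c))) n :=
        add_le_add (ih (mapsTo_comp_succAbove hmaps hinj hc hgc) (injOn_comp_succAbove hinj))
          (sum_range_le_sum_comp (fun x _ y hy hxy => hf hxy hy le_rfl)
            (injOn_min_endpoints hm hmaps hinj hc hgc)
            fun a ha => (min_le_left _ _).trans (hg (by omega)))
      _ ≤ farSum m n (fun a b => f (g (succAbove c a)) (g (succAbove c b))) +
          ∑ a ∈ range (n + 1 - m), f (g (min a c)) (g (max (a + m) c)) := by
        refine add_le_add le_rfl (sum_le_sum fun a ha => ?_)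
        have ha : a < n + 1 - m := mem_range.1 ha
        exact hf.apply_min_le hsymm (hg (by omega)) (hg (by omega))
      _ = farSum m (n + 1) (fun a b => f (g a) (g b)) :=
        (farSum_succ_eq_succAbove m (fun a b => f (g a) (g b)) hc).symm

theorem IsRobinsonSim.apply_le_apply {n : ℕ} {A : Matrix (Fin n) (Fin n) ℝ}
    (hA : IsRobinsonSim A) {i' i j j' : Fin n} (hi : i' ≤ i) (hij : i ≤ j) (hj : j ≤ j') :
    A i' j' ≤ A i j :=
  calc A i' j' ≤ A i j' := (hA.2 i' i j' hi (hij.trans hj)).trans (min_le_right _ _)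
    _ ≤ A i j := (hA.2 i j j' hij hj).trans (min_le_left _ _)

theorem IsRobinsonSim.isRobinson_clamp {k : ℕ} {A : Matrix (Fin (k + 1)) (Fin (k + 1)) ℝ}
    (hA : IsRobinsonSim A) : IsRobinson fun a b => A (Fin.clamp a k) (Fin.clamp b k) :=
  fun _ _ _ _ hi hij hj => hA.apply_le_apply (min_le_min_right k hi) (min_le_min_right k hij)
    (min_le_min_right k hj)

theorem mInner_BDelta_eq_two_mul_farSum {n Δ : ℕ} (hΔ : Δ < n) {X : Matrix (Fin n) (Fin n) ℝ}
    (hX : ∀ i j, X i j = X j i) {F : ℕ → ℕ → ℝ} (hF : ∀ i j : Fin n, F i j = X i j) :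
    mInner X (BDelta n Δ) = 2 * farSum (n - Δ) n F := by
  set u : ℕ → ℕ → ℝ := fun a b => if a + (n - Δ) ≤ b then F a b else 0
  have hentry : ∀ i j : Fin n, X i j * BDelta n Δ i j = u i j + u j i := by
    intro i j
    simp only [BDelta, Matrix.of_apply, u, le_abs, hF, hX j i]
    split_ifs <;> first | omega | ring
  have hrow : ∀ a, ∑ b ∈ range n, u a b = ∑ b ∈ Ico (a + (n - Δ)) n, F a b := by
    intro a
    rw [← sum_filter]
    congr 1
    ext b
    simp only [mem_filter, mem_range, mem_Ico]
    omega
  calc mInner X (BDelta n Δ) = ∑ i : Fin n, ∑ j : Fin n, (u i j + u j i) := by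
        simp only [mInner, hentry]
    _ = 2 * ∑ i : Fin n, ∑ j : Fin n, u i j := by
        simp only [sum_add_distrib]
        rw [sum_comm (f := fun i j : Fin n => u j i)]
        ring
    _ = 2 * farSum (n - Δ) n F := by
        simp only [Fin.sum_univ_eq_sum_range (u _), hrow]
        rw [Fin.sum_univ_eq_sum_range (fun a => ∑ b ∈ Ico (a + (n - Δ)) n, F a b), farSum]

theorem identity_optimal_for_BDelta_general {n : ℕ} (hn : 1 ≤ n)
    (A : Matrix (Fin n) (Fin n) ℝ) (hA : IsRobinsonSim A)
    (Δ : ℕ) (hΔ2 : Δ ≤ n - 1) (π : Equiv.Perm (Fin n)) :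
    mInner (permMat A π) (BDelta n Δ) ≥ mInner A (BDelta n Δ) := by
  obtain ⟨k, rfl⟩ : ∃ k, n = k + 1 := ⟨n - 1, by omega⟩
  set f : ℕ → ℕ → ℝ := fun a b => A (Fin.clamp a k) (Fin.clamp b k)
  set g : ℕ → ℕ := fun a => if h : a < k + 1 then π ⟨a, h⟩ else a
  have hf : ∀ i j : Fin (k + 1), f i j = A i j := fun i j => by
    simp only [f, Fin.clamp, Nat.min_eq_left (Nat.lt_succ_iff.1 i.2),
      Nat.min_eq_left (Nat.lt_succ_iff.1 j.2)]
  have hg : ∀ i : Fin (k + 1), g i = π i := fun i => dif_pos i.2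
  have hmaps : Set.MapsTo g (Set.Iio (k + 1)) (Set.Iio (k + 1)) := fun a ha =>
    (hg ⟨a, ha⟩).trans_lt (π ⟨a, ha⟩).is_lt
  have hinj : Set.InjOn g (Set.Iio (k + 1)) := fun a ha b hb h =>
    Fin.mk.inj_iff.1 <| π.injective <| Fin.ext <|
      (hg ⟨a, ha⟩).symm.trans (h.trans (hg ⟨b, hb⟩))
  rw [ge_iff_le, mInner_BDelta_eq_two_mul_farSum (by omega) hA.1 hf,
    mInner_BDelta_eq_two_mul_farSum (X := permMat A π) (F := fun a b => f (g a) (g b)) (by omega)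
      (fun i j => hA.1 (π i) (π j)) (fun i j => by simp only [permMat, Matrix.of_apply, hg, hf])]
  exact mul_le_mul_of_nonneg_left (farSum_le_farSum_comp (by omega) (fun a b => hA.1 _ _)
    hA.isRobinson_clamp hmaps hinj) zero_le_two

/-- If `A` is an `n × n` Robinson similarity matrix and `1 ≤ Δ ≤ n - 1`,
then for every permutation `π` of `[n]` one has `⟨A_π, B^Δ_n⟩ ≥ ⟨A, B^Δ_n⟩`. -/
theorem identity_optimal_for_BDelta {n : ℕ} (hn : 1 ≤ n)
    (A : Matrix (Fin n) (Fin n) ℝ) (hA : IsRobinsonSim A)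
    (Δ : ℕ) (hΔ1 : 1 ≤ Δ) (hΔ2 : Δ ≤ n - 1) (π : Equiv.Perm (Fin n)) :
    mInner (permMat A π) (BDelta n Δ) ≥ mInner A (BDelta n Δ) :=
  identity_optimal_for_BDelta_general hn A hA Δ hΔ2 π
end

section
/- Let n ≥ 1, let A be an n×n Robinson similarity matrix, let Δ be an integer with 1 ≤ Δ ≤ n−1, and let π be a permutation of [n]. Then ∑_{{i,j} ∈ E^Δ_n} A_{π(i)π(j)} ≥ ∑_{{i,j} ∈ E^Δ_n} A_{ij}, where the sums run over the unordered pairs {i, n−Δ+j} with 1 ≤ i ≤ j ≤ Δ. -/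
/-!
Both sums compare threshold by threshold: it suffices that for every `t` at least as many pairs
of `E^Δ_n` carry an entry `≥ t` after permuting. The threshold graph `{A i j ≥ t}` is Robinson,
so the left neighbours of a vertex form an interval ending just before it. With `c = n - Δ - 1`
and `d⁻` the left degree, the long edges in the natural order therefore number at most
`∑ w, (d⁻ w - c)`, and in the order `π` at least `∑ w, (d⁻_π w - c)`, since only `c` positions
lie close before a vertex. The natural order minimises `∑ w, (d⁻ w - c)`: deleting the vertex `v`
placed last by `π` lowers the `π`-side by `deg v - c` and the natural side by at most as much,
because a right neighbour of `v` has no left neighbours besides those of `v` and the neighbours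
of `v` in between.
-/

open Finset

section Dominance

variable {ι κ M : Type*} [AddCommMonoid M] [LinearOrder M] [IsOrderedAddMonoid M]

theorem sum_le_sum_of_card_filter_le {s : Finset ι} {t : Finset κ} {f : ι → M} {g : κ → M}
    (hcard : #s = #t) (h : ∀ x, #{i ∈ s | x ≤ f i} ≤ #{j ∈ t | x ≤ g j}) :
    ∑ i ∈ s, f i ≤ ∑ j ∈ t, g j := by
  classical
  induction s using Finset.induction_on_max_value f generalizing t with
  | empty => simp [card_eq_zero.1 hcard.symm]
  | insert i s his hmax ih =>
    obtain ⟨j, hj, hgj⟩ := t.exists_max_image g (card_pos.1 (by rw [← hcard]; simp))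
    have hfg : f i ≤ g j := by
      obtain ⟨j', hj'⟩ : {j ∈ t | f i ≤ g j}.Nonempty :=
        card_pos.1 (lt_of_lt_of_le (card_pos.2 ⟨i, by simp⟩) (h (f i)))
      exact (mem_filter.1 hj').2.trans (hgj j' (mem_filter.1 hj').1)
    rw [sum_insert his, ← add_sum_erase t g hj]
    have hcard' : #s = #(t.erase j) := by
      rw [card_erase_of_mem hj, ← hcard, card_insert_of_notMem his, Nat.add_sub_cancel]
    refine add_le_add hfg (ih hcard' fun x => ?_)
    have hx := h x
    rw [filter_insert] at hx
    rw [filter_erase]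
    by_cases hxi : x ≤ f i
    · rw [if_pos hxi, card_insert_of_notMem (fun hi => his (mem_filter.1 hi).1)] at hx
      rw [card_erase_of_mem (mem_filter.2 ⟨hj, hxi.trans hfg⟩)]
      omega
    · rw [filter_false_of_mem fun i' hi' hxi' => hxi (hxi'.trans (hmax i' hi'))]
      exact Nat.zero_le _

end Dominance

section RobinsonRelation

def IsRobinsonRel {α : Type*} [Preorder α] (r : α → α → Prop) : Prop :=
  ∀ ⦃a b c d⦄, a ≤ b → b ≤ c → c ≤ d → r a d → r b c

variable {α β : Type*} [LinearOrder α] [LinearOrder β] {r : α → α → Prop} [DecidableRel r]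

theorem card_filter_le_tsub_of_le_add_card_lt {s : Finset α} {d : α → ℕ} {a c : ℕ}
    (hd : ∀ w ∈ s, d w ≤ a + #{u ∈ s | u < w}) : #{w ∈ s | c ≤ d w} ≤ #s - (c - a) := by
  rcases ({w ∈ s | c ≤ d w} : Finset α).eq_empty_or_nonempty with hempty | hne
  · simp [hempty]
  obtain ⟨w₀, hw₀, hmin⟩ := exists_min_image _ id hne
  obtain ⟨hw₀s, hcw₀⟩ := mem_filter.1 hw₀
  have hdisj : Disjoint {w ∈ s | c ≤ d w} {u ∈ s | u < w₀} :=
    disjoint_filter.2 fun u hu hcu hlt => (hmin u (mem_filter.2 ⟨hu, hcu⟩)).not_gt hlt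
  have hunion := card_le_card (union_subset (filter_subset (fun w => c ≤ d w) s)
    (filter_subset (· < w₀) s))
  rw [card_union_of_disjoint hdisj] at hunion
  have := hd w₀ hw₀s
  omega

theorem IsRobinsonRel.card_lt_rel_le (hr : IsRobinsonRel r) {s : Finset α} {v w : α}
    (hv : v ∉ s) (hvw : v < w) (hrvw : r v w) :
    #{u ∈ s | u < w ∧ r u w} ≤
      #{u ∈ s | u < v ∧ r u v} + #{u ∈ {x ∈ s | v < x ∧ r v x} | u < w} := by
  refine (card_le_card fun u hu => ?_).trans (card_union_le _ _)
  obtain ⟨hus, huw, hruw⟩ := mem_filter.1 hu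
  rcases lt_or_gt_of_ne (ne_of_mem_of_not_mem hus hv) with huv | hvu
  · exact mem_union_left _ (mem_filter.2 ⟨hus, huv, hr le_rfl huv.le hvw.le hruw⟩)
  · refine mem_union_right _ (mem_filter.2 ⟨mem_filter.2 ⟨hus, hvu, ?_⟩, huw⟩)
    exact hr le_rfl hvu.le huw.le hrvw

theorem card_rel_eq_card_lt_add_card_gt (hsymm : ∀ ⦃a b⦄, r a b → r b a) {s : Finset α} {v : α}
    (hv : v ∉ s) :
    #{u ∈ s | r u v} = #{u ∈ s | u < v ∧ r u v} + #{u ∈ s | v < u ∧ r v u} := by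
  rw [← card_union_of_disjoint (disjoint_filter.2 fun u _ h h' => h.1.not_gt h'.1)]
  congr 1
  ext u
  simp only [mem_filter, mem_union]
  constructor
  · rintro ⟨hus, hruv⟩
    rcases lt_or_gt_of_ne (ne_of_mem_of_not_mem hus hv) with huv | hvu
    exacts [Or.inl ⟨hus, huv, hruv⟩, Or.inr ⟨hus, hvu, hsymm hruv⟩]
  · rintro (⟨hus, -, hruv⟩ | ⟨hus, -, hrvu⟩)
    exacts [⟨hus, hruv⟩, ⟨hus, hsymm hrvu⟩]

theorem IsRobinsonRel.sum_tsub_card_lt_le (hr : IsRobinsonRel r)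
    (hsymm : ∀ ⦃a b⦄, r a b → r b a) (c : ℕ) (τ : α → β) (s : Finset α) (hτ : Set.InjOn τ s) :
    ∑ w ∈ s, (#{u ∈ s | u < w ∧ r u w} - c) ≤ ∑ w ∈ s, (#{u ∈ s | τ u < τ w ∧ r u w} - c) := by
  induction s using Finset.induction_on_max_value τ with
  | empty => simp
  | insert v s hv hmax ih =>
    have hτlt : ∀ x ∈ s, τ x < τ v := fun x hx => (hmax x hx).lt_of_ne fun h =>
      ne_of_mem_of_not_mem hx hv (hτ (mem_insert_of_mem hx) (mem_insert_self v s) h)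
    have hsplit := card_rel_eq_card_lt_add_card_gt hsymm hv
    set B : Finset α := {w ∈ s | v < w ∧ r v w}
    have hleft : ∀ w ∈ s, #{u ∈ insert v s | u < w ∧ r u w} - c
        = (#{u ∈ s | u < w ∧ r u w} - c) +
          if (v < w ∧ r v w) ∧ c ≤ #{u ∈ s | u < w ∧ r u w} then 1 else 0 := by
      intro w hw
      rw [filter_insert]
      by_cases hB : v < w ∧ r v w
      · rw [if_pos hB, card_insert_of_notMem fun h => hv (mem_filter.1 h).1]
        simp only [hB, true_and]
        split_ifs <;> omega
      · rw [if_neg hB, if_neg fun h => hB h.1, add_zero]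
    have hL : ∑ w ∈ insert v s, (#{u ∈ insert v s | u < w ∧ r u w} - c)
        = (#{u ∈ s | u < v ∧ r u v} - c) + ∑ w ∈ s, (#{u ∈ s | u < w ∧ r u w} - c)
          + #{w ∈ B | c ≤ #{u ∈ s | u < w ∧ r u w}} := by
      rw [sum_insert hv, sum_congr rfl hleft, sum_add_distrib, sum_boole, filter_filter,
        filter_insert, if_neg fun h => h.1.false, add_assoc]
      rfl
    have hR : ∑ w ∈ insert v s, (#{u ∈ insert v s | τ u < τ w ∧ r u w} - c)
        = (#{u ∈ s | r u v} - c) + ∑ w ∈ s, (#{u ∈ s | τ u < τ w ∧ r u w} - c) := by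
      rw [sum_insert hv, filter_insert, if_neg fun h => h.1.false,
        filter_congr fun u hu => and_iff_right (hτlt u hu)]
      congr 1
      refine sum_congr rfl fun w hw => ?_
      rw [filter_insert, if_neg fun h => (h.1.trans (hτlt w hw)).false]
    have hcount :
        #{w ∈ B | c ≤ #{u ∈ s | u < w ∧ r u w}} ≤ #B - (c - #{u ∈ s | u < v ∧ r u v}) :=
      card_filter_le_tsub_of_le_add_card_lt fun w hw =>
        hr.card_lt_rel_le hv (mem_filter.1 hw).2.1 (mem_filter.1 hw).2.2
    have := ih (hτ.mono (by simp))
    rw [hL, hR, hsplit]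
    omega

end RobinsonRelation

theorem card_lt_rel_tsub_le {α : Type*} {r : α → α → Prop} [DecidableRel r] {s : Finset α}
    {τ : α → ℕ} (hτ : Set.InjOn τ s) (c : ℕ) (w : α) :
    #{u ∈ s | τ u < τ w ∧ r u w} - c ≤ #{u ∈ s | τ u + (c + 1) ≤ τ w ∧ r u w} := by
  classical
  have hwindow : #{u ∈ s | τ w < τ u + (c + 1) ∧ τ u < τ w} ≤ c := by
    have hmaps : Set.MapsTo τ ({u ∈ s | τ w < τ u + (c + 1) ∧ τ u < τ w} : Finset α)
        (Ico (τ w - c) (τ w)) :=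
      fun u hu => by
        obtain ⟨-, h1, h2⟩ := mem_filter.1 hu
        exact mem_Ico.2 ⟨by omega, h2⟩
    have := card_le_card_of_injOn τ hmaps (hτ.mono (coe_subset.2 (filter_subset _ _)))
    rw [Nat.card_Ico] at this
    omega
  have hsub := card_le_card (s := {u ∈ s | τ u < τ w ∧ r u w})
    (t := {u ∈ s | τ u + (c + 1) ≤ τ w ∧ r u w} ∪ {u ∈ s | τ w < τ u + (c + 1) ∧ τ u < τ w})
    fun u hu => by
      obtain ⟨hus, hlt, hru⟩ := mem_filter.1 hu
      by_cases hlong : τ u + (c + 1) ≤ τ w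
      · exact mem_union_left _ (mem_filter.2 ⟨hus, hlong, hru⟩)
      · exact mem_union_right _ (mem_filter.2 ⟨hus, by omega, hlt⟩)
  have := card_union_le {u ∈ s | τ u + (c + 1) ≤ τ w ∧ r u w}
    {u ∈ s | τ w < τ u + (c + 1) ∧ τ u < τ w}
  omega

theorem IsRobinsonRel.card_add_le_le_tsub {n c : ℕ} {r : Fin n → Fin n → Prop} [DecidableRel r]
    (hr : IsRobinsonRel r) (w : Fin n) :
    #{u | u.val + (c + 1) ≤ w.val ∧ r u w} ≤ #{u | u < w ∧ r u w} - c := by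
  rcases ({u | u.val + (c + 1) ≤ w.val ∧ r u w} : Finset (Fin n)).eq_empty_or_nonempty
    with hempty | ⟨u₀, hu₀⟩
  · simp [hempty]
  obtain ⟨hu₀w, hru₀⟩ := (mem_filter.1 hu₀).2
  set W := Ico (⟨w - c, by omega⟩ : Fin n) w
  have hW : #W = c := by rw [Fin.card_Ico]; dsimp only; omega
  have hdisj : Disjoint ({u | u.val + (c + 1) ≤ w.val ∧ r u w} : Finset (Fin n)) W :=
    disjoint_left.2 fun u hu huW => by
      have := (mem_filter.1 hu).2.1
      have := Fin.le_iff_val_le_val.1 (mem_Ico.1 huW).1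
      dsimp only at this
      omega
  have hsub : ({u | u.val + (c + 1) ≤ w.val ∧ r u w} : Finset (Fin n)) ∪ W ⊆
      ({u | u < w ∧ r u w} : Finset (Fin n)) := by
    refine union_subset (fun u hu => ?_) fun u huW => ?_
    · obtain ⟨huw, hru⟩ := (mem_filter.1 hu).2
      exact mem_filter.2 ⟨mem_univ u, Fin.lt_def.2 (by omega), hru⟩
    · obtain ⟨hlo, hhi⟩ := mem_Ico.1 huW
      rw [Fin.le_iff_val_le_val] at hlo
      dsimp only at hlo
      have hu₀u : u₀ ≤ u := Fin.le_iff_val_le_val.2 (by omega)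
      exact mem_filter.2 ⟨mem_univ u, hhi, hr hu₀u hhi.le le_rfl hru₀⟩
  have := card_le_card hsub
  rw [card_union_of_disjoint hdisj, hW] at this
  omega

theorem card_filter_EDelta (n Δ : ℕ) (r : Fin n → Fin n → Prop) [DecidableRel r] :
    #{p ∈ EDelta n Δ | r p.1 p.2} = ∑ w, #{u | u.val + (n - Δ) ≤ w.val ∧ r u w} := by
  rw [EDelta, filter_filter, card_filter, Fintype.sum_prod_type_right]
  simp only [card_filter]

theorem card_filter_EDelta_perm (n Δ : ℕ) (π : Equiv.Perm (Fin n)) (r : Fin n → Fin n → Prop)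
    [DecidableRel r] :
    #{p ∈ EDelta n Δ | r (π p.1) (π p.2)} =
      ∑ w, #{u | (π.symm u).val + (n - Δ) ≤ (π.symm w).val ∧ r u w} := by
  rw [card_filter_EDelta n Δ fun i j => r (π i) (π j), ← π.symm.sum_comp]
  refine sum_congr rfl fun w _ => card_equiv π fun u => ?_
  simp

theorem IsRobinsonSim.apply_le_apply_s1 {n : ℕ} {A : Matrix (Fin n) (Fin n) ℝ} (hA : IsRobinsonSim A)
    {a b c d : Fin n} (hab : a ≤ b) (hbc : b ≤ c) (hcd : c ≤ d) : A a d ≤ A b c :=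
  calc A a d ≤ A b d := (hA.2 a b d hab (hbc.trans hcd)).trans (min_le_right _ _)
    _ ≤ A b c := (hA.2 b c d hbc hcd).trans (min_le_left _ _)

theorem IsRobinsonSim.isRobinsonRel_le {n : ℕ} {A : Matrix (Fin n) (Fin n) ℝ}
    (hA : IsRobinsonSim A) (t : ℝ) : IsRobinsonRel fun i j => t ≤ A i j :=
  fun _ _ _ _ hab hbc hcd h => h.trans (hA.apply_le_apply_s1 hab hbc hcd)

theorem IsRobinsonRel.card_filter_EDelta_le {n : ℕ} {r : Fin n → Fin n → Prop} [DecidableRel r]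
    (hr : IsRobinsonRel r) (hsymm : ∀ ⦃a b⦄, r a b → r b a) {Δ c : ℕ} (hc : n - Δ = c + 1)
    (π : Equiv.Perm (Fin n)) :
    #{p ∈ EDelta n Δ | r p.1 p.2} ≤ #{p ∈ EDelta n Δ | r (π p.1) (π p.2)} := by
  set τ : Fin n → ℕ := fun u => (π.symm u).val
  have hτ : Set.InjOn τ (univ : Finset (Fin n)) :=
    (Fin.val_injective.comp π.symm.injective).injOn
  calc #{p ∈ EDelta n Δ | r p.1 p.2}
      = ∑ w, #{u | u.val + (c + 1) ≤ w.val ∧ r u w} := by rw [card_filter_EDelta, hc]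
    _ ≤ ∑ w, (#{u | u < w ∧ r u w} - c) := sum_le_sum fun w _ => hr.card_add_le_le_tsub w
    _ ≤ ∑ w, (#{u | τ u < τ w ∧ r u w} - c) := hr.sum_tsub_card_lt_le hsymm c τ univ hτ
    _ ≤ ∑ w, #{u | τ u + (c + 1) ≤ τ w ∧ r u w} :=
      sum_le_sum fun w _ => card_lt_rel_tsub_le hτ c w
    _ = #{p ∈ EDelta n Δ | r (π p.1) (π p.2)} := by rw [card_filter_EDelta_perm, hc]

theorem EDelta_sum_ge_general {n : ℕ} (hn : 1 ≤ n)
    (A : Matrix (Fin n) (Fin n) ℝ) (hA : IsRobinsonSim A)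
    (Δ : ℕ) (hΔ2 : Δ ≤ n - 1) (π : Equiv.Perm (Fin n)) :
    ∑ p ∈ EDelta n Δ, A (π p.1) (π p.2) ≥ ∑ p ∈ EDelta n Δ, A p.1 p.2 :=
  sum_le_sum_of_card_filter_le rfl fun t => by
    -- instance search does not unfold `Matrix` to find this one
    let _ : DecidableRel fun i j => t ≤ A i j := fun _ _ => Real.decidableLE _ _
    exact (hA.isRobinsonRel_le t).card_filter_EDelta_le (fun i j h => (hA.1 i j).symm ▸ h)
      (show n - Δ = n - Δ - 1 + 1 by omega) π

/-- If `A` is an `n × n` Robinson similarity matrix, `1 ≤ Δ ≤ n - 1` and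
`π` is a permutation of `[n]`, then the sum of `A (π i) (π j)` over the unordered
pairs in `E^Δ_n` is at least the corresponding sum of `A i j`. -/
theorem EDelta_sum_ge {n : ℕ} (hn : 1 ≤ n)
    (A : Matrix (Fin n) (Fin n) ℝ) (hA : IsRobinsonSim A)
    (Δ : ℕ) (hΔ1 : 1 ≤ Δ) (hΔ2 : Δ ≤ n - 1) (π : Equiv.Perm (Fin n)) :
    ∑ p ∈ EDelta n Δ, A (π p.1) (π p.2) ≥ ∑ p ∈ EDelta n Δ, A p.1 p.2 :=
  EDelta_sum_ge_general hn A hA Δ hΔ2 π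
end

section
/- Let B be an n×n symmetric Toeplitz matrix and let β_0, β_1, …, β_{n−1} be the real numbers such that B_{ij} = β_k whenever |i−j| = k. Then B = β_0 J + ∑_{k=1}^{n−1} (β_k − β_{k−1}) B^{n−k}_n, where J is the all-ones matrix. Moreover, if B is a Robinson dissimilarity matrix with β_0 = 0 ≤ β_1 ≤ ⋯ ≤ β_{n−1}, then B is a conic (nonnegative) combination of the matrices B^Δ_n for Δ = 1, …, n−1. -/
/-- The all-ones matrix `J`. -/
def Jmat (n : ℕ) : Matrix (Fin n) (Fin n) ℝ := Matrix.of fun _ _ => 1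

/-!
The matrices `B^{n-k}_n` are the indicators of `k ≤ |i - j|`, so the `(i, j)` entry of
`β 0 • J + ∑_k (β k - β (k - 1)) • B^{n-k}_n` is a telescoping sum up to `k = |i - j|`, which
collapses to `β |i - j| = B i j`. For a monotone `β` with `β 0 = 0` the coefficients
`β k - β (k - 1)` are nonnegative, and reindexing by `Δ = n - k` gives the conic combination.
-/

open Finset

lemma sum_Icc_one_sub_pred {M : Type*} [AddCommGroup M] (f : ℕ → M) (d : ℕ) :
    ∑ k ∈ Icc 1 d, (f k - f (k - 1)) = f d - f 0 := by
  induction d with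
  | zero => simp
  | succ d ih =>
    rw [sum_Icc_succ_top (by omega), ih, Nat.add_sub_cancel]
    abel

lemma sum_Icc_one_reflect {M : Type*} [AddCommMonoid M] (f : ℕ → M) (n : ℕ) :
    ∑ k ∈ Icc 1 (n - 1), f k = ∑ Δ ∈ Icc 1 (n - 1), f (n - Δ) :=
  sum_nbij' (fun k => n - k) (fun Δ => n - Δ)
    (by intro k hk; simp only [mem_Icc] at hk ⊢; omega)
    (by intro Δ hΔ; simp only [mem_Icc] at hΔ ⊢; omega)
    (by intro k hk; simp only [mem_Icc] at hk; omega)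
    (by intro Δ hΔ; simp only [mem_Icc] at hΔ; omega)
    (by intro k hk; simp only [mem_Icc] at hk; rw [Nat.sub_sub_self (by omega)])

lemma BDelta_sub_apply {n k : ℕ} (hk : k ≤ n) (i j : Fin n) :
    BDelta n (n - k) i j = if k ≤ ((i : ℤ) - j).natAbs then 1 else 0 := by
  simp only [BDelta, Matrix.of_apply, Int.abs_eq_natAbs, Nat.cast_sub hk, sub_sub_cancel,
    Nat.cast_le]

lemma eq_smul_Jmat_add_sum_BDelta {n : ℕ} (B : Matrix (Fin n) (Fin n) ℝ) (β : ℕ → ℝ)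
    (hβ : ∀ i j : Fin n, B i j = β ((i : ℤ) - j).natAbs) :
    B = β 0 • Jmat n + ∑ k ∈ Icc 1 (n - 1), (β k - β (k - 1)) • BDelta n (n - k) := by
  ext i j
  set d := ((i : ℤ) - j).natAbs
  have hd : d ≤ n - 1 := by omega
  have htrunc : (Icc 1 (n - 1)).filter (· ≤ d) = Icc 1 d := by
    ext k
    simp only [mem_filter, mem_Icc]
    omega
  calc B i j = β 0 + ∑ k ∈ Icc 1 d, (β k - β (k - 1)) := by
        rw [hβ, sum_Icc_one_sub_pred]
        ring
    _ = β 0 + ∑ k ∈ Icc 1 (n - 1), (β k - β (k - 1)) * if k ≤ d then 1 else 0 := by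
        simp only [mul_ite, mul_one, mul_zero]
        rw [← sum_filter, htrunc]
    _ = _ := by
        simp only [Matrix.add_apply, Matrix.smul_apply, Matrix.sum_apply, Jmat, Matrix.of_apply,
          smul_eq_mul, mul_one]
        congr 1
        refine sum_congr rfl fun k hk => ?_
        rw [BDelta_sub_apply (by simp only [mem_Icc] at hk; omega)]

theorem toeplitz_decomposition_general {n : ℕ}
    (B : Matrix (Fin n) (Fin n) ℝ)
    (β : ℕ → ℝ) (hβ : ∀ i j : Fin n, B i j = β ((i.val : ℤ) - (j.val : ℤ)).natAbs) :
    B = β 0 • Jmat n + ∑ k ∈ Finset.Icc 1 (n - 1), (β k - β (k - 1)) • BDelta n (n - k)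
    ∧ (IsRobinsonDissim B → β 0 = 0 → (∀ k, 1 ≤ k → k ≤ n - 1 → β (k - 1) ≤ β k) →
        ∃ lam : ℕ → ℝ, (∀ Δ ∈ Finset.Icc 1 (n - 1), 0 ≤ lam Δ) ∧
          B = ∑ Δ ∈ Finset.Icc 1 (n - 1), lam Δ • BDelta n Δ) := by
  have hdecomp := eq_smul_Jmat_add_sum_BDelta B β hβ
  refine ⟨hdecomp, fun _ hβ0 hmono => ⟨fun Δ => β (n - Δ) - β (n - Δ - 1), ?_, ?_⟩⟩
  · intro Δ hΔ
    rw [mem_Icc] at hΔ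
    linarith [hmono (n - Δ) (by omega) (by omega)]
  · rw [hdecomp, hβ0, zero_smul, zero_add, sum_Icc_one_reflect]
    refine sum_congr rfl fun Δ hΔ => ?_
    rw [mem_Icc] at hΔ
    rw [Nat.sub_sub_self (by omega)]

/-- a symmetric Toeplitz matrix `B` with entries `β_{|i-j|}` decomposes as
`B = β 0 • J + ∑_{k=1}^{n-1} (β k - β (k-1)) • B^{n-k}_n`; moreover, if `B` is a
Robinson dissimilarity with `β 0 = 0 ≤ β 1 ≤ ⋯ ≤ β (n-1)`, then `B` is a conic
combination of the matrices `B^Δ_n`, `Δ = 1, …, n-1`. -/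
theorem toeplitz_decomposition {n : ℕ} (hn : 1 ≤ n)
    (B : Matrix (Fin n) (Fin n) ℝ) (hBsym : ∀ i j, B i j = B j i) (hBtoep : IsToeplitz B)
    (β : ℕ → ℝ) (hβ : ∀ i j : Fin n, B i j = β ((i.val : ℤ) - (j.val : ℤ)).natAbs) :
    B = β 0 • Jmat n + ∑ k ∈ Finset.Icc 1 (n - 1), (β k - β (k - 1)) • BDelta n (n - k)
    ∧ (IsRobinsonDissim B → β 0 = 0 → (∀ k, 1 ≤ k → k ≤ n - 1 → β (k - 1) ≤ β k) →
        ∃ lam : ℕ → ℝ, (∀ Δ ∈ Finset.Icc 1 (n - 1), 0 ≤ lam Δ) ∧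
          B = ∑ Δ ∈ Finset.Icc 1 (n - 1), lam Δ • BDelta n Δ) :=
  toeplitz_decomposition_general B β hβ
end

section
/- Let A be an n×n Toeplitz Robinson similarity matrix and let B be an n×n Robinson dissimilarity matrix. Then for every permutation π of [n], ⟨A_π, B⟩ ≥ ⟨A, B⟩; that is, the identity permutation is optimal for QAP(A,B). -/
/-!
Symmetry and the Toeplitz property give `A i j = g |i - j|`, and the Robinson property makes `g`
nonincreasing, so `A` is `g 0` minus a nonnegative combination of the 0/1 matrices
`F_t = farMatrix n t` with entries `[t < |i - j|]`. It therefore suffices that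
`⟨(F_t)_π, B⟩ ≤ ⟨F_t, B⟩`: the pairs `i < j` with `|π i - π j| > t` carry no more `B`-weight
than the pairs with `j - i > t`. Both families have the same size and `B` grows when the interval
`[i, j]` grows, so by Hall's theorem it is enough that every up-set of intervals contains at
least as many intervals of length `> t` as intervals that `π` stretches beyond `t`. That is
proved by induction on `n`, deleting the vertex `w` that `π` sends to `n - 1`: the intervals
with an end at `w` are counted through the neighbourhood of `w` (a prefix and a suffix), and
what they can lose is made up by the intervals of length `t + 1` straddling `w`, which are
exactly those that become short once `w` is deleted.
-/

open Finset

lemma Finset.eq_range_card_of_le_mem {s : Finset ℕ} (hs : ∀ y ∈ s, ∀ z ≤ y, z ∈ s) :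
    s = range #s := by
  refine eq_of_subset_of_card_le (fun y hy => ?_) (card_range _).le
  have : #(range (y + 1)) ≤ #s :=
    card_le_card fun z hz => hs y hy z (by simpa [Nat.lt_succ_iff] using hz)
  simpa [Nat.lt_succ_iff] using this

lemma Finset.eq_Ico_card_of_ge_mem {s : Finset ℕ} {m : ℕ} (hm : ∀ y ∈ s, y < m)
    (hs : ∀ y ∈ s, ∀ z, y ≤ z → z < m → z ∈ s) : s = Ico (m - #s) m := by
  refine eq_of_subset_of_card_le (fun y hy => ?_) (by rw [Nat.card_Ico]; omega)
  have : #(Ico y m) ≤ #s := card_le_card fun z hz => hs y hy z (mem_Ico.1 hz).1 (mem_Ico.1 hz).2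
  have := hm y hy
  rw [Nat.card_Ico] at *
  rw [mem_Ico]
  omega

lemma eq_sub_sum_range_mul_ite_lt (g : ℕ → ℝ) {d N : ℕ} (hd : d ≤ N) :
    g d = g 0 - ∑ s ∈ range N, (g s - g (s + 1)) * if s < d then 1 else 0 := by
  simp only [mul_ite, mul_one, mul_zero]
  rw [← sum_filter, show (range N).filter (· < d) = range d by ext; simp; omega,
    sum_range_sub']
  ring

section IntervalUpsets

variable {m n w t : ℕ} {U : Finset (ℕ × ℕ)} {f : ℕ → ℕ}

def pairsBelow (m : ℕ) : Finset (ℕ × ℕ) :=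
  (range m ×ˢ range m).filter fun e => e.1 < e.2

@[simp]
lemma mem_pairsBelow {e : ℕ × ℕ} : e ∈ pairsBelow m ↔ e.1 < e.2 ∧ e.2 < m := by
  simp only [pairsBelow, mem_filter, mem_product, mem_range]
  omega

lemma sum_range_sum_range_eq_two_mul_sum_pairsBelow (F : ℕ → ℕ → ℝ)
    (hF : ∀ a b, F a b = F b a) (hF₀ : ∀ a, F a a = 0) :
    ∑ a ∈ range n, ∑ b ∈ range n, F a b = 2 * ∑ e ∈ pairsBelow n, F e.1 e.2 := by
  have hlower : ∑ e ∈ (range n ×ˢ range n).filter (fun e => ¬e.1 < e.2), F e.1 e.2 =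
      ∑ e ∈ pairsBelow n, F e.1 e.2 := by
    rw [← sum_filter_add_sum_filter_not _ fun e : ℕ × ℕ => e.1 = e.2,
      sum_eq_zero fun e he => by rw [(mem_filter.1 he).2, hF₀], zero_add]
    refine sum_nbij' Prod.swap Prod.swap (fun e he => ?_) (fun e he => ?_) (fun e _ => rfl)
      (fun e _ => rfl) fun e _ => hF _ _
    all_goals
      simp only [mem_filter, mem_product, mem_range, mem_pairsBelow, Prod.fst_swap,
        Prod.snd_swap] at he ⊢
      omega
  rw [← sum_product' (f := F), ← sum_filter_add_sum_filter_not _ fun e : ℕ × ℕ => e.1 < e.2,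
    hlower, pairsBelow]
  ring

def IsIntervalUpset (m : ℕ) (U : Finset (ℕ × ℕ)) : Prop :=
  U ⊆ pairsBelow m ∧ ∀ e ∈ U, ∀ x y, x ≤ e.1 → e.2 ≤ y → y < m → (x, y) ∈ U

def upClosure (m : ℕ) (W : Finset (ℕ × ℕ)) : Finset (ℕ × ℕ) :=
  (pairsBelow m).filter fun r => ∃ e ∈ W, r.1 ≤ e.1 ∧ e.2 ≤ r.2

lemma isIntervalUpset_upClosure (W : Finset (ℕ × ℕ)) : IsIntervalUpset m (upClosure m W) := by
  refine ⟨filter_subset _ _, fun r hr x y hx hy hym => ?_⟩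
  simp only [upClosure, mem_filter, mem_pairsBelow] at hr ⊢
  obtain ⟨⟨hr12, -⟩, e, he, he1, he2⟩ := hr
  exact ⟨⟨by omega, hym⟩, e, he, by omega, by omega⟩

def skip (w y : ℕ) : ℕ := if y < w then y else y + 1

def unskip (w z : ℕ) : ℕ := if z < w then z else z - 1

lemma unskip_skip (w y : ℕ) : unskip w (skip w y) = y := by
  unfold skip unskip; split_ifs <;> omega

lemma skip_unskip {z : ℕ} (h : z ≠ w) : skip w (unskip w z) = z := by
  unfold skip unskip; split_ifs <;> omega

lemma skip_ne (w y : ℕ) : skip w y ≠ w := by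
  unfold skip; split_ifs <;> omega

lemma skip_monotone (w : ℕ) : Monotone (skip w) := fun x y h => by
  unfold skip; split_ifs <;> omega

lemma skip_lt_succ {y : ℕ} (h : y < n) : skip w y < n + 1 := by
  unfold skip; split_ifs <;> omega

lemma Set.BijOn.comp_skip (hf : Set.BijOn f (Set.Iio (n + 1)) (Set.Iio (n + 1)))
    (hw : w < n + 1) (hfw : f w = n) : Set.BijOn (f ∘ skip w) (Set.Iio n) (Set.Iio n) := by
  have hne : ∀ y, y < n → f (skip w y) ≠ n := fun y hy h =>
    skip_ne w y (hf.injOn (skip_lt_succ hy) hw (h.trans hfw.symm))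
  refine ⟨fun y hy => ?_, fun x hx y hy hxy => ?_, fun x hx => ?_⟩
  · have := hf.mapsTo (skip_lt_succ (n := n) (w := w) hy)
    simp only [Set.mem_Iio, Function.comp_apply] at this hy ⊢
    have := hne y hy
    omega
  · have := hf.injOn (skip_lt_succ (w := w) hx) (skip_lt_succ hy) hxy
    rw [← unskip_skip w x, this, unskip_skip]
  · obtain ⟨z, hz, rfl⟩ := hf.surjOn (Set.mem_Iio.2 (Nat.lt_succ_of_lt hx))
    have hzw : z ≠ w := by rintro rfl; simp at hx; omega
    refine ⟨unskip w z, ?_, by simp [skip_unskip hzw]⟩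
    simp only [Set.mem_Iio] at hz hx ⊢
    unfold unskip; split_ifs <;> omega

def eraseVertex (w n : ℕ) (U : Finset (ℕ × ℕ)) : Finset (ℕ × ℕ) :=
  (pairsBelow n).filter fun e => (skip w e.1, skip w e.2) ∈ U

lemma isIntervalUpset_eraseVertex (hU : IsIntervalUpset (n + 1) U) (w : ℕ) :
    IsIntervalUpset n (eraseVertex w n U) := by
  refine ⟨filter_subset _ _, fun e he x y hx hy hyn => ?_⟩
  simp only [eraseVertex, mem_filter, mem_pairsBelow] at he ⊢
  exact ⟨by omega, hU.2 _ he.2 _ _ (skip_monotone w hx) (skip_monotone w hy) (skip_lt_succ hyn)⟩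

lemma card_filter_eraseVertex (hU : U ⊆ pairsBelow (n + 1)) (hw : w < n + 1)
    (P : ℕ × ℕ → Prop) [DecidablePred P] :
    #(U.filter fun e => (e.1 ≠ w ∧ e.2 ≠ w) ∧ P e) =
      #((eraseVertex w n U).filter fun e => P (skip w e.1, skip w e.2)) := by
  refine card_nbij' (fun e => (unskip w e.1, unskip w e.2)) (fun e => (skip w e.1, skip w e.2))
    (fun e he => ?_) (fun e he => ?_) (fun e he => ?_) (fun e he => ?_)
  · simp only [coe_filter, Set.mem_ofPred_eq, eraseVertex, mem_filter, mem_pairsBelow] at he ⊢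
    have := mem_pairsBelow.1 (hU he.1)
    have := he.2.1
    rw [skip_unskip he.2.1.1, skip_unskip he.2.1.2]
    refine ⟨⟨?_, he.1⟩, he.2.2⟩
    unfold unskip; split_ifs <;> omega
  · simp only [coe_filter, Set.mem_ofPred_eq, eraseVertex, mem_filter] at he ⊢
    exact ⟨he.1.2, ⟨skip_ne _ _, skip_ne _ _⟩, he.2⟩
  · simp only [coe_filter, Set.mem_ofPred_eq] at he
    simp [skip_unskip he.2.1.1, skip_unskip he.2.1.2]
  · simp [unskip_skip]

lemma card_filter_eq_touch_add_not_touch (U : Finset (ℕ × ℕ)) (w : ℕ) (P : ℕ × ℕ → Prop)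
    [DecidablePred P] :
    #(U.filter P) = #(U.filter fun e => (e.1 = w ∨ e.2 = w) ∧ P e) +
      #(U.filter fun e => (e.1 ≠ w ∧ e.2 ≠ w) ∧ P e) := by
  rw [← card_union_of_disjoint (disjoint_filter.2 fun e _ h h' => by tauto), ← filter_or]
  exact congrArg card (filter_congr fun e _ => by tauto)

lemma card_filter_long_skip_ge (V : Finset (ℕ × ℕ)) (w t : ℕ) :
    #(V.filter fun e => t < e.2 - e.1) +
        #(V.filter fun e => skip w e.1 < w ∧ w < skip w e.2 ∧ skip w e.2 - skip w e.1 = t + 1) ≤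
      #(V.filter fun e => t < skip w e.2 - skip w e.1) := by
  rw [← card_union_of_disjoint (disjoint_filter.2 fun e _ h h' => by
    unfold skip at h'; split_ifs at h' <;> omega), ← filter_or]
  refine card_le_card fun e he => ?_
  simp only [mem_filter] at he ⊢
  refine ⟨he.1, ?_⟩
  have := he.2
  unfold skip at this ⊢; split_ifs at this ⊢ <;> omega

def lowerNbhd (w : ℕ) (U : Finset (ℕ × ℕ)) : Finset ℕ :=
  (range w).filter fun x => (x, w) ∈ U

def upperNbhd (w m : ℕ) (U : Finset (ℕ × ℕ)) : Finset ℕ :=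
  (Ico (w + 1) m).filter fun y => (w, y) ∈ U

@[simp]
lemma mem_lowerNbhd {x : ℕ} : x ∈ lowerNbhd w U ↔ x < w ∧ (x, w) ∈ U := by
  simp [lowerNbhd]

@[simp]
lemma mem_upperNbhd {y : ℕ} : y ∈ upperNbhd w m U ↔ (w < y ∧ y < m) ∧ (w, y) ∈ U := by
  simp [upperNbhd]

lemma card_filter_touch (hU : U ⊆ pairsBelow m) (P : ℕ × ℕ → Prop) [DecidablePred P] :
    #(U.filter fun e => (e.1 = w ∨ e.2 = w) ∧ P e) =
      #((lowerNbhd w U).filter fun x => P (x, w)) +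
        #((upperNbhd w m U).filter fun y => P (w, y)) := by
  have hsplit : U.filter (fun e => (e.1 = w ∨ e.2 = w) ∧ P e) =
      ((lowerNbhd w U).filter fun x => P (x, w)).image (·, w) ∪
        ((upperNbhd w m U).filter fun y => P (w, y)).image (Prod.mk w) := by
    ext ⟨a, b⟩
    have := @mem_pairsBelow m (a, b)
    simp only [mem_filter, mem_union, mem_image, mem_lowerNbhd, mem_upperNbhd, Prod.mk.injEq]
    constructor
    · rintro ⟨hab, rfl | rfl, hP⟩
      · exact Or.inr ⟨b, ⟨⟨⟨by grind, by grind⟩, hab⟩, hP⟩, rfl, rfl⟩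
      · exact Or.inl ⟨a, ⟨⟨by grind, hab⟩, hP⟩, rfl, rfl⟩
    · rintro (⟨x, ⟨⟨-, hx⟩, hP⟩, rfl, rfl⟩ | ⟨y, ⟨⟨-, hy⟩, hP⟩, rfl, rfl⟩)
      · exact ⟨hx, Or.inr rfl, hP⟩
      · exact ⟨hy, Or.inl rfl, hP⟩
  have hdisj : Disjoint (((lowerNbhd w U).filter fun x => P (x, w)).image (·, w))
      (((upperNbhd w m U).filter fun y => P (w, y)).image (Prod.mk w)) := by
    simp only [disjoint_left, mem_image, mem_filter, mem_lowerNbhd, not_exists, not_and]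
    rintro _ ⟨x, ⟨⟨hx, -⟩, -⟩, rfl⟩ y _ h
    cases h
    omega
  rw [hsplit, card_union_of_disjoint hdisj, card_image_of_injective _ (Prod.mk_left_injective w),
    card_image_of_injective _ (Prod.mk_right_injective w)]

lemma IsIntervalUpset.exists_lowerNbhd_eq_range (hU : IsIntervalUpset m U) :
    ∃ a ≤ w, lowerNbhd w U = range a := by
  refine ⟨_, (card_filter_le _ _).trans (card_range w).le, eq_range_card_of_le_mem ?_⟩
  simp only [mem_lowerNbhd]
  rintro x ⟨hxw, hx⟩ z hz
  exact ⟨by omega, hU.2 _ hx z w hz le_rfl (mem_pairsBelow.1 (hU.1 hx)).2⟩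

lemma IsIntervalUpset.exists_upperNbhd_eq_Ico (hU : IsIntervalUpset m U) :
    ∃ c ≤ m - (w + 1), upperNbhd w m U = Ico (m - c) m := by
  refine ⟨_, (card_filter_le _ _).trans (Nat.card_Ico _ _).le, eq_Ico_card_of_ge_mem
    (fun y hy => (mem_upperNbhd.1 hy).1.2) ?_⟩
  simp only [mem_upperNbhd]
  rintro y ⟨⟨hwy, -⟩, hy⟩ z hyz hz
  exact ⟨⟨by omega, hz⟩, hU.2 _ hy w z le_rfl hyz hz⟩

lemma card_filter_nbhd_far_le (hf : Set.BijOn f (Set.Iio (n + 1)) (Set.Iio (n + 1)))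
    (hw : w < n + 1) (hfw : f w = n) :
    #((lowerNbhd w U).filter fun x => t < Nat.dist (f x) (f w)) +
      #((upperNbhd w (n + 1) U).filter fun y => t < Nat.dist (f w) (f y)) ≤ n - t := by
  simp only [Nat.dist_comm (f w)]
  rw [← card_union_of_disjoint (disjoint_filter_filter (disjoint_left.2 fun x hx hx' => by
    simp only [mem_lowerNbhd, mem_upperNbhd] at hx hx'; omega)), ← filter_union]
  refine (card_le_card_of_injOn f (fun x hx => ?_) (hf.injOn.mono fun x hx => ?_)).trans
    (card_range _).le
  all_goals
    simp only [coe_filter, mem_union, mem_lowerNbhd, mem_upperNbhd, Set.mem_ofPred_eq] at hx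
    have hxn : x < n + 1 := by omega
  · have hfx : f x ≠ n := fun h => by
      have := hf.injOn hxn hw (h.trans hfw.symm)
      omega
    have := hf.mapsTo hxn
    simp only [Set.mem_Iio, coe_range, hfw, Nat.dist] at this hx ⊢
    omega
  · exact hxn

/-- An interval `(u, u + t + 1)` straddling `w` lies above `(u, w)` when `u < a` and above
`(w, u + t + 1)` when `n + 1 - c ≤ u + t + 1`. -/
lemma IsIntervalUpset.card_Ico_sdiff_le_card_straddle {a c : ℕ} (hU : IsIntervalUpset (n + 1) U)
    (hlo : lowerNbhd w U = range a) (hhi : upperNbhd w (n + 1) U = Ico (n + 1 - c) (n + 1)) :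
    #(Ico (w - t) (min w (n - t)) \ Ico a (n - c - t)) ≤
      #(U.filter fun e => e.1 < w ∧ w < e.2 ∧ e.2 - e.1 = t + 1) := by
  refine card_le_card_of_injOn (fun u => (u, u + t + 1)) (fun u hu => ?_)
    (fun u _ v _ h => (Prod.mk.inj h).1)
  simp only [coe_sdiff, Set.mem_sdiff, mem_coe, mem_Ico, coe_filter, Set.mem_ofPred_eq] at hu ⊢
  refine ⟨?_, by omega, by omega, by omega⟩
  by_cases hua : u < a
  · have := (mem_lowerNbhd.1 (hlo ▸ mem_range.2 hua)).2
    exact hU.2 _ this u (u + t + 1) le_rfl (by omega) (by omega)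
  · have := (mem_upperNbhd.1 (hhi ▸ mem_Ico.2 (⟨by omega, by omega⟩ :
      n + 1 - c ≤ u + t + 1 ∧ u + t + 1 < n + 1))).2
    exact hU.2 _ this u (u + t + 1) (by omega) le_rfl (by omega)

lemma IsIntervalUpset.card_filter_touch_far_le (hU : IsIntervalUpset (n + 1) U)
    (hf : Set.BijOn f (Set.Iio (n + 1)) (Set.Iio (n + 1))) (hw : w < n + 1) (hfw : f w = n) :
    #(U.filter fun e => (e.1 = w ∨ e.2 = w) ∧ t < Nat.dist (f e.1) (f e.2)) ≤
      #(U.filter fun e => (e.1 = w ∨ e.2 = w) ∧ t < e.2 - e.1) +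
        #(U.filter fun e => e.1 < w ∧ w < e.2 ∧ e.2 - e.1 = t + 1) := by
  obtain ⟨a, ha, hlo⟩ := hU.exists_lowerNbhd_eq_range (w := w)
  obtain ⟨c, hc, hhi⟩ := hU.exists_upperNbhd_eq_Ico (w := w)
  have hfar := card_filter_nbhd_far_le (U := U) (t := t) hf hw hfw
  have hstraddle := hU.card_Ico_sdiff_le_card_straddle (t := t) hlo hhi
  have hJ := card_sdiff_add_card_inter (Ico (w - t) (min w (n - t))) (Ico a (n - c - t))
  rw [Ico_inter_Ico, Nat.card_Ico, Nat.card_Ico] at hJ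
  rw [card_filter_touch hU.1, card_filter_touch hU.1]
  rw [hlo, hhi] at hfar ⊢
  have hlo_le := card_filter_le (range a) fun x => t < Nat.dist (f x) (f w)
  have hhi_le := card_filter_le (Ico (n + 1 - c) (n + 1)) fun y => t < Nat.dist (f w) (f y)
  have hnear_lo : ((range a).filter fun x => t < w - x) = range (min a (w - t)) := by
    ext x; simp only [mem_filter, mem_range]; omega
  have hnear_hi : ((Ico (n + 1 - c) (n + 1)).filter fun y => t < y - w) =
      Ico (max (n + 1 - c) (w + t + 1)) (n + 1) := by
    ext y; simp only [mem_filter, mem_Ico]; omega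
  simp only [hnear_lo, hnear_hi, card_range, Nat.card_Ico] at hlo_le hhi_le ⊢
  omega

theorem IsIntervalUpset.card_filter_far_le (hU : IsIntervalUpset m U)
    (hf : Set.BijOn f (Set.Iio m) (Set.Iio m)) :
    #(U.filter fun e => t < Nat.dist (f e.1) (f e.2)) ≤ #(U.filter fun e => t < e.2 - e.1) := by
  induction m generalizing U f with
  | zero =>
    rw [show U = ∅ from eq_empty_of_forall_notMem fun e he => by
      have := mem_pairsBelow.1 (hU.1 he); omega]
    simp
  | succ n ih =>
    obtain ⟨w, hw, hfw⟩ := hf.surjOn (Set.mem_Iio.2 n.lt_succ_self)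
    have hw : w < n + 1 := hw
    have hIH := ih (isIntervalUpset_eraseVertex hU w) (hf.comp_skip hw hfw)
    have hstar := hU.card_filter_touch_far_le (t := t) hf hw hfw
    have hstraddle : #(U.filter fun e => e.1 < w ∧ w < e.2 ∧ e.2 - e.1 = t + 1) =
        #((eraseVertex w n U).filter fun e =>
          skip w e.1 < w ∧ w < skip w e.2 ∧ skip w e.2 - skip w e.1 = t + 1) := by
      rw [← card_filter_eraseVertex hU.1 hw fun e => e.1 < w ∧ w < e.2 ∧ e.2 - e.1 = t + 1]
      exact congrArg card (filter_congr fun e _ => by omega)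
    have hlong := card_filter_long_skip_ge (eraseVertex w n U) w t
    have hsplit_far :=
      card_filter_eq_touch_add_not_touch U w fun e => t < Nat.dist (f e.1) (f e.2)
    have hsplit_long := card_filter_eq_touch_add_not_touch U w fun e => t < e.2 - e.1
    rw [card_filter_eraseVertex hU.1 hw] at hsplit_far hsplit_long
    dsimp only [Function.comp_apply] at hIH hsplit_far hsplit_long
    omega

lemma card_filter_far_eq (hf : Set.BijOn f (Set.Iio m) (Set.Iio m)) :
    #((pairsBelow m).filter fun e => t < Nat.dist (f e.1) (f e.2)) =
      #((pairsBelow m).filter fun e => t < e.2 - e.1) := by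
  refine card_bij (fun e _ => (min (f e.1) (f e.2), max (f e.1) (f e.2))) (fun e he => ?_)
    (fun e he e' he' h => ?_) (fun r hr => ?_)
  · simp only [mem_filter, mem_pairsBelow] at he ⊢
    unfold Nat.dist at he
    have h1 := hf.mapsTo (Set.mem_Iio.2 (he.1.1.trans he.1.2))
    have h2 := hf.mapsTo (Set.mem_Iio.2 he.1.2)
    simp only [Set.mem_Iio] at h1 h2
    omega
  · simp only [mem_filter, mem_pairsBelow, Prod.mk.injEq] at he he' h
    have hinj := fun {a b} (ha : a < m) (hb : b < m) (hab : f a = f b) => hf.injOn ha hb hab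
    have : (f e.1 = f e'.1 ∧ f e.2 = f e'.2) ∨ (f e.1 = f e'.2 ∧ f e.2 = f e'.1) := by omega
    rcases this with ⟨h1, h2⟩ | ⟨h1, h2⟩
    · exact Prod.ext (hinj (by omega) (by omega) h1) (hinj (by omega) (by omega) h2)
    · have := hinj (by omega) (by omega) h1
      have := hinj (by omega) (by omega) h2
      omega
  · simp only [mem_filter, mem_pairsBelow] at hr
    obtain ⟨a, ha, hfa⟩ := hf.surjOn (Set.mem_Iio.2 (hr.1.1.trans hr.1.2))
    obtain ⟨b, hb, hfb⟩ := hf.surjOn (Set.mem_Iio.2 hr.1.2)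
    simp only [Set.mem_Iio] at ha hb
    have hab : a ≠ b := by rintro rfl; omega
    refine ⟨(min a b, max a b), ?_, ?_⟩
    · simp only [mem_filter, mem_pairsBelow]
      unfold Nat.dist
      rcases lt_or_gt_of_ne hab with h | h
      · rw [min_eq_left h.le, max_eq_right h.le, hfa, hfb]; omega
      · rw [min_eq_right h.le, max_eq_left h.le, hfa, hfb]; omega
    · rcases lt_or_gt_of_ne hab with h | h
      · simp only [min_eq_left h.le, max_eq_right h.le, hfa, hfb]
        exact Prod.ext (by omega) (by omega)
      · simp only [min_eq_right h.le, max_eq_left h.le, hfa, hfb]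
        exact Prod.ext (by omega) (by omega)

theorem sum_filter_far_le (hf : Set.BijOn f (Set.Iio m) (Set.Iio m)) (W : ℕ → ℕ → ℝ)
    (hW : ∀ x a b y, x ≤ a → a < b → b ≤ y → y < m → W a b ≤ W x y) :
    ∑ e ∈ (pairsBelow m).filter (fun e => t < Nat.dist (f e.1) (f e.2)), W e.1 e.2 ≤
      ∑ e ∈ (pairsBelow m).filter (fun e => t < e.2 - e.1), W e.1 e.2 := by
  set S := (pairsBelow m).filter fun e => t < Nat.dist (f e.1) (f e.2)
  set T := (pairsBelow m).filter fun e => t < e.2 - e.1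
  let above : S → Finset (ℕ × ℕ) := fun e => T.filter fun r => r.1 ≤ e.1.1 ∧ e.1.2 ≤ r.2
  have hall : ∀ s : Finset S, #s ≤ #(s.biUnion above) := by
    intro s
    have hsub : s.image Subtype.val ⊆ (upClosure m (s.image Subtype.val)).filter
        fun e => t < Nat.dist (f e.1) (f e.2) := fun e he => by
      obtain ⟨e, -, rfl⟩ := mem_image.1 he
      have := mem_filter.1 e.2
      exact mem_filter.2 ⟨mem_filter.2 ⟨this.1, e, he, le_rfl, le_rfl⟩, this.2⟩
    calc #s = #(s.image Subtype.val) := (card_image_of_injective _ Subtype.val_injective).symm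
      _ ≤ _ := card_le_card hsub
      _ ≤ #((upClosure m (s.image Subtype.val)).filter fun e => t < e.2 - e.1) :=
        (isIntervalUpset_upClosure _).card_filter_far_le hf
      _ ≤ #(s.biUnion above) := card_le_card fun r hr => by
        simp only [upClosure, mem_filter, mem_image] at hr
        obtain ⟨⟨hr, e, ⟨e', he', rfl⟩, h1, h2⟩, hlong⟩ := hr
        exact mem_biUnion.2 ⟨e', he', mem_filter.2 ⟨mem_filter.2 ⟨hr, hlong⟩, h1, h2⟩⟩
  obtain ⟨φ, hφ, hφmem⟩ := (all_card_le_biUnion_card_iff_exists_injective above).1 hall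
  have himage : univ.image φ = T := by
    refine eq_of_subset_of_card_le (fun r hr => ?_) ?_
    · obtain ⟨e, -, rfl⟩ := mem_image.1 hr
      exact (mem_filter.1 (hφmem e)).1
    · rw [card_image_of_injective _ hφ, card_univ, Fintype.card_coe, card_filter_far_eq hf]
  calc ∑ e ∈ S, W e.1 e.2 = ∑ e : S, W e.1.1 e.1.2 := (sum_coe_sort S fun e => W e.1 e.2).symm
    _ ≤ ∑ e : S, W (φ e).1 (φ e).2 := sum_le_sum fun e _ => by
      have hφe := mem_filter.1 (hφmem e)
      have he := mem_pairsBelow.1 (mem_filter.1 e.2).1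
      exact hW _ _ _ _ hφe.2.1 he.1 hφe.2.2 (mem_pairsBelow.1 (mem_filter.1 hφe.1).1).2
    _ = ∑ r ∈ T, W r.1 r.2 := by rw [← himage, sum_image fun x _ y _ h => hφ h]

end IntervalUpsets

def farMatrix (n t : ℕ) : Matrix (Fin n) (Fin n) ℝ :=
  Matrix.of fun i j => if t < Nat.dist i j then 1 else 0

section Matrix

variable {n : ℕ} {A B : Matrix (Fin n) (Fin n) ℝ} {g : ℕ → ℝ}

@[simp]
lemma permMat_one (A : Matrix (Fin n) (Fin n) ℝ) : permMat A 1 = A := rfl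

def extendPerm (σ : Equiv.Perm (Fin n)) (x : ℕ) : ℕ :=
  if h : x < n then σ ⟨x, h⟩ else x

def extendMatrix (B : Matrix (Fin n) (Fin n) ℝ) (a b : ℕ) : ℝ :=
  if h : a < n ∧ b < n then B ⟨a, h.1⟩ ⟨b, h.2⟩ else 0

@[simp]
lemma extendPerm_val (σ : Equiv.Perm (Fin n)) (i : Fin n) : extendPerm σ i = σ i := by
  simp [extendPerm]

@[simp]
lemma extendMatrix_val (B : Matrix (Fin n) (Fin n) ℝ) (i j : Fin n) :
    extendMatrix B i j = B i j := by
  simp [extendMatrix]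

lemma bijOn_extendPerm (σ : Equiv.Perm (Fin n)) :
    Set.BijOn (extendPerm σ) (Set.Iio n) (Set.Iio n) := by
  refine ⟨fun x hx => ?_, fun x hx y hy h => ?_,
    fun x hx => ⟨σ.symm ⟨x, hx⟩, (σ.symm _).2, by simp⟩⟩
  · simp only [Set.mem_Iio] at hx ⊢
    simp [extendPerm, hx]
  · simp only [Set.mem_Iio] at hx hy
    simpa [extendPerm, hx, hy, Fin.val_inj] using h

lemma extendMatrix_comm (hB : ∀ i j, B i j = B j i) (a b : ℕ) :
    extendMatrix B a b = extendMatrix B b a := by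
  unfold extendMatrix
  by_cases h : a < n ∧ b < n
  · rw [dif_pos h, dif_pos ⟨h.2, h.1⟩, hB]
  · rw [dif_neg h, dif_neg fun h' => h ⟨h'.2, h'.1⟩]

lemma IsRobinsonDissim.extendMatrix_le (hB : IsRobinsonDissim B) {x a b y : ℕ} (hxa : x ≤ a)
    (hab : a < b) (hby : b ≤ y) (hy : y < n) : extendMatrix B a b ≤ extendMatrix B x y := by
  have h₁ := hB.2 ⟨x, by omega⟩ ⟨a, by omega⟩ ⟨b, by omega⟩ (Fin.mk_le_mk.2 hxa)
    (Fin.mk_le_mk.2 hab.le)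
  have h₂ := hB.2 ⟨x, by omega⟩ ⟨b, by omega⟩ ⟨y, hy⟩ (Fin.mk_le_mk.2 (by omega))
    (Fin.mk_le_mk.2 hby)
  rw [extendMatrix, extendMatrix, dif_pos ⟨by omega, by omega⟩, dif_pos ⟨by omega, hy⟩]
  exact (le_max_right _ _).trans (h₁.trans ((le_max_left _ _).trans h₂))

lemma mInner_permMat_farMatrix (hB : ∀ i j, B i j = B j i) (σ : Equiv.Perm (Fin n)) (t : ℕ) :
    mInner (permMat (farMatrix n t) σ) B = 2 * ∑ e ∈ (pairsBelow n).filter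
      (fun e => t < Nat.dist (extendPerm σ e.1) (extendPerm σ e.2)), extendMatrix B e.1 e.2 := by
  set F : ℕ → ℕ → ℝ := fun a b =>
    if t < Nat.dist (extendPerm σ a) (extendPerm σ b) then extendMatrix B a b else 0
  have hF : ∀ i j : Fin n,
      (if t < Nat.dist (σ i) (σ j) then (1 : ℝ) else 0) * B i j = F i j := by
    simp [F]
  simp only [mInner, permMat, farMatrix, Matrix.of_apply, hF]
  rw [Fin.sum_univ_eq_sum_range (fun a => ∑ j : Fin n, F a j)]
  simp only [Fin.sum_univ_eq_sum_range (F _)]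
  rw [sum_range_sum_range_eq_two_mul_sum_pairsBelow, sum_filter]
  · intro a b
    simp only [F, Nat.dist_comm (extendPerm σ a), extendMatrix_comm hB a b]
  · intro a
    simp [F]

lemma mInner_permMat_farMatrix_le (hB : IsRobinsonDissim B) (π : Equiv.Perm (Fin n)) (t : ℕ) :
    mInner (permMat (farMatrix n t) π) B ≤ mInner (farMatrix n t) B := by
  have hid : mInner (farMatrix n t) B =
      2 * ∑ e ∈ (pairsBelow n).filter (fun e => t < e.2 - e.1), extendMatrix B e.1 e.2 := by
    rw [← permMat_one (farMatrix n t), mInner_permMat_farMatrix hB.1]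
    congr 2
    refine filter_congr fun e he => ?_
    have := mem_pairsBelow.1 he
    simp [extendPerm, show e.1 < n by omega, this.2, Nat.dist]
    omega
  rw [hid, mInner_permMat_farMatrix hB.1]
  exact mul_le_mul_of_nonneg_left (sum_filter_far_le (bijOn_extendPerm π) _
    fun x a b y => hB.extendMatrix_le) zero_le_two

lemma IsToeplitz.apply_add (hA : IsToeplitz A) {i j k : ℕ} (hi : i + k < n) (hj : j + k < n) :
    A ⟨i + k, hi⟩ ⟨j + k, hj⟩ = A ⟨i, by omega⟩ ⟨j, by omega⟩ := by
  induction k with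
  | zero => rfl
  | succ k ih =>
    rw [← ih (by omega) (by omega)]
    exact (hA ⟨i + k, by omega⟩ ⟨j + k, by omega⟩ (by omega) (by omega)).symm

lemma IsToeplitz.exists_apply_eq_dist (hsymm : ∀ i j, A i j = A j i) (hA : IsToeplitz A) :
    ∃ g : ℕ → ℝ, ∀ i j : Fin n, A i j = g (Nat.dist i j) := by
  refine ⟨fun d => if h : d < n then A ⟨0, by omega⟩ ⟨d, h⟩ else 0, fun i j => ?_⟩
  wlog hij : i ≤ j generalizing i j
  · rw [hsymm, this j i (le_of_not_ge hij), Nat.dist_comm]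
  have hj : Nat.dist i j + i = j := by unfold Nat.dist; omega
  dsimp only
  rw [dif_pos (by omega), ← hA.apply_add (i := 0) (j := Nat.dist i j) (k := i) (by omega)
    (by omega)]
  congr 1 <;> ext <;> simp only [Nat.dist] <;> omega

lemma IsRobinsonSim.succ_le_of_eq_dist (hA : IsRobinsonSim A)
    (hg : ∀ i j : Fin n, A i j = g (Nat.dist i j)) {d : ℕ} (hd : d + 1 < n) :
    g (d + 1) ≤ g d := by
  have := hA.2 ⟨0, by omega⟩ ⟨1, by omega⟩ ⟨d + 1, hd⟩ (Fin.mk_le_mk.2 (by omega))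
    (Fin.mk_le_mk.2 (by omega))
  simp only [hg, Nat.dist] at this
  simpa using this.trans (min_le_right _ _)

lemma apply_eq_sub_sum_farMatrix (hg : ∀ i j : Fin n, A i j = g (Nat.dist i j)) (i j : Fin n) :
    A i j = g 0 - ∑ s ∈ range (n - 1), (g s - g (s + 1)) * farMatrix n s i j := by
  rw [hg, eq_sub_sum_range_mul_ite_lt g (N := n - 1) (by unfold Nat.dist; omega)]
  rfl

lemma mInner_permMat_eq_sub_sum {a : ℝ} {c : ℕ → ℝ} {N : ℕ}
    (hA : ∀ i j, A i j = a - ∑ s ∈ range N, c s * farMatrix n s i j) (σ : Equiv.Perm (Fin n)) :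
    mInner (permMat A σ) B =
      a * ∑ i, ∑ j, B i j - ∑ s ∈ range N, c s * mInner (permMat (farMatrix n s) σ) B := by
  simp only [mInner, permMat, Matrix.of_apply, hA, sub_mul, sum_sub_distrib, sum_mul, mul_sum,
    mul_assoc]
  rw [sum_comm (s := range N)]
  exact congrArg _ (sum_congr rfl fun x _ => sum_comm)

lemma mInner_permMat_sub_mInner (hg : ∀ i j : Fin n, A i j = g (Nat.dist i j))
    (σ : Equiv.Perm (Fin n)) :
    mInner (permMat A σ) B - mInner A B = ∑ s ∈ range (n - 1),
      (g s - g (s + 1)) * (mInner (farMatrix n s) B - mInner (permMat (farMatrix n s) σ) B) := by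
  have hA := apply_eq_sub_sum_farMatrix hg
  have hid := mInner_permMat_eq_sub_sum (B := B) hA 1
  simp only [permMat_one] at hid
  rw [mInner_permMat_eq_sub_sum hA σ, hid]
  simp only [mul_sub, sum_sub_distrib]
  ring

end Matrix

/-- if `A` is a Toeplitz Robinson similarity and `B` is a Robinson
dissimilarity, then `⟨A_π, B⟩ ≥ ⟨A, B⟩` for every permutation `π`. -/
theorem identity_optimal_QAP_toeplitzA {n : ℕ}
    (A B : Matrix (Fin n) (Fin n) ℝ)
    (hA : IsRobinsonSim A) (hAT : IsToeplitz A) (hB : IsRobinsonDissim B)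
    (π : Equiv.Perm (Fin n)) :
    mInner (permMat A π) B ≥ mInner A B := by
  obtain ⟨g, hg⟩ := hAT.exists_apply_eq_dist hA.1
  rw [ge_iff_le, ← sub_nonneg, mInner_permMat_sub_mInner hg π]
  refine sum_nonneg fun s hs => mul_nonneg ?_ (sub_nonneg.2 (mInner_permMat_farMatrix_le hB π s))
  exact sub_nonneg.2 (hA.succ_le_of_eq_dist hg (by simp only [mem_range] at hs; omega))
end

section
/- Let A be an n×n symmetric matrix that can be written as a conic (nonnegative) combination of cut matrices CUT(u,v). Then the identity permutation is optimal for the 2-SUM problem on A; that is, for every permutation π of [n], ∑_{i,j=1}^n A_{π(i)π(j)} (i−j)^2 ≥ ∑_{i,j=1}^n A_{ij} (i−j)^2. -/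
/-- The cut matrix `CUT(u,v)` (with `1`-based indices `1 ≤ u ≤ v ≤ n`): its `(i,j)`
entry is `1` if `u ≤ i, j ≤ v` and `0` otherwise. -/
def CutMat (n u v : ℕ) : Matrix (Fin n) (Fin n) ℝ :=
  Matrix.of fun i j =>
    if u ≤ i.val + 1 ∧ i.val + 1 ≤ v ∧ u ≤ j.val + 1 ∧ j.val + 1 ≤ v then 1 else 0

/-- `A` is a conic (nonnegative) combination of cut matrices `CUT(u,v)`, `1 ≤ u ≤ v ≤ n`. -/
def IsConicCombOfCuts {n : ℕ} (A : Matrix (Fin n) (Fin n) ℝ) : Prop :=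
  ∃ (s : Finset (ℕ × ℕ)) (c : ℕ × ℕ → ℝ),
    (∀ p ∈ s, 0 ≤ c p ∧ 1 ≤ p.1 ∧ p.1 ≤ p.2 ∧ p.2 ≤ n) ∧
    A = ∑ p ∈ s, c p • CutMat n p.1 p.2

/-- The 2-SUM objective `∑_{i,j} A (π i) (π j) (i - j)²`. -/
def twoSum {n : ℕ} (A : Matrix (Fin n) (Fin n) ℝ) (π : Equiv.Perm (Fin n)) : ℝ :=
  ∑ i, ∑ j, A (π i) (π j) * ((i.val : ℝ) - (j.val : ℝ)) ^ 2

/-!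
Since `twoSum` is linear in the matrix, it suffices to treat a single cut `CUT(u,v)`. Under `π`
its objective is `∑_{i,j ∈ S} (i - j)²`, where `S` is the set of positions that `π` sends into
the block `[u, v]`. Listing `S` increasingly as `s₀ < ⋯ < s_{k-1}` gives `|s_a - s_b| ≥ |a - b|`,
so among sets of `k` positions this sum is smallest for an interval, which is what the identity
produces.
-/

open Finset

def sumSqDiff (S : Finset ℕ) : ℝ := ∑ i ∈ S, ∑ j ∈ S, ((i : ℝ) - j) ^ 2

lemma sub_le_sub_of_strictMono {k : ℕ} {f : Fin k → ℕ} (hf : StrictMono f) {a b : Fin k}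
    (hab : a ≤ b) : (b : ℕ) - a ≤ f b - f a := by
  have hcard : (Icc a b).card ≤ (Icc (f a) (f b)).card :=
    card_le_card_of_injOn f (fun x hx => by
      rw [coe_Icc, Set.mem_Icc] at hx
      simpa using ⟨hf.monotone hx.1, hf.monotone hx.2⟩) hf.injective.injOn
  rw [Fin.card_Icc, Nat.card_Icc] at hcard
  omega

lemma sq_sub_le_sq_sub_of_strictMono {k : ℕ} {f : Fin k → ℕ} (hf : StrictMono f) (a b : Fin k) :
    ((a : ℝ) - b) ^ 2 ≤ ((f a : ℝ) - f b) ^ 2 := by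
  wlog hab : a ≤ b generalizing a b
  · rw [sub_sq_comm, sub_sq_comm (f a : ℝ)]
    exact this b a (le_of_not_ge hab)
  have hgap : (b : ℝ) - a ≤ (f b : ℝ) - f a := by
    have := sub_le_sub_of_strictMono hf hab
    have hfab := hf.monotone hab
    have hab' : (a : ℕ) ≤ b := hab
    rw [← Nat.cast_sub hab', ← Nat.cast_sub hfab]
    exact_mod_cast this
  have hab' : (a : ℝ) ≤ b := by exact_mod_cast hab
  nlinarith

lemma sumSqDiff_range_card_le (S : Finset ℕ) : sumSqDiff (range S.card) ≤ sumSqDiff S := by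
  let f := S.orderEmbOfFin rfl
  calc sumSqDiff (range S.card)
      = ∑ a : Fin S.card, ∑ b : Fin S.card, ((a : ℝ) - b) ^ 2 := by
        simp only [sumSqDiff, sum_range]
    _ ≤ ∑ a, ∑ b, ((f a : ℝ) - f b) ^ 2 := by
        refine sum_le_sum fun a _ => sum_le_sum fun b _ => ?_
        exact sq_sub_le_sq_sub_of_strictMono f.strictMono a b
    _ = sumSqDiff (univ.map f.toEmbedding) := by simp [sumSqDiff]
    _ = sumSqDiff S := by rw [S.map_orderEmbOfFin_univ]

lemma sumSqDiff_Ico (a b : ℕ) : sumSqDiff (Ico a b) = sumSqDiff (range (b - a)) := by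
  simp only [sumSqDiff, sum_Ico_eq_sum_range, Nat.cast_add, add_sub_add_left_eq_sub]

lemma sumSqDiff_Ico_le {S : Finset ℕ} {a b : ℕ} (h : S.card = b - a) :
    sumSqDiff (Ico a b) ≤ sumSqDiff S := by
  rw [sumSqDiff_Ico, ← h]
  exact sumSqDiff_range_card_le S

lemma twoSum_sum_smul {n : ℕ} {ι : Type*} (s : Finset ι) (c : ι → ℝ)
    (M : ι → Matrix (Fin n) (Fin n) ℝ) (π : Equiv.Perm (Fin n)) :
    twoSum (∑ p ∈ s, c p • M p) π = ∑ p ∈ s, c p * twoSum (M p) π := by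
  simp only [twoSum, Matrix.sum_apply, Matrix.smul_apply, smul_eq_mul, sum_mul,
    mul_sum, mul_assoc]
  calc _ = ∑ i, ∑ p ∈ s, ∑ j, c p * (M p (π i) (π j) * ((i : ℝ) - j) ^ 2) :=
        sum_congr rfl fun _ _ => sum_comm
    _ = _ := sum_comm

def cutRows (n u v : ℕ) (π : Equiv.Perm (Fin n)) : Finset ℕ :=
  (univ.filter fun i : Fin n => u ≤ (π i).val + 1 ∧ (π i).val + 1 ≤ v).map Fin.valEmbedding

lemma twoSum_cutMat (n u v : ℕ) (π : Equiv.Perm (Fin n)) :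
    twoSum (CutMat n u v) π = sumSqDiff (cutRows n u v π) := by
  simp only [twoSum, sumSqDiff, cutRows, CutMat, Matrix.of_apply, sum_map, sum_filter,
    Fin.valEmbedding_apply]
  refine sum_congr rfl fun i _ => ?_
  by_cases hi : u ≤ (π i).val + 1 ∧ (π i).val + 1 ≤ v
  · simp only [hi, true_and, if_true, ite_mul, one_mul, zero_mul]
  · rw [if_neg hi]
    exact sum_eq_zero fun j _ => by rw [if_neg fun h => hi ⟨h.1, h.2.1⟩, zero_mul]

lemma card_cutRows (n u v : ℕ) (π : Equiv.Perm (Fin n)) :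
    (cutRows n u v π).card = (cutRows n u v 1).card := by
  simp only [cutRows, card_map]
  exact card_equiv π (by simp)

lemma cutRows_one (n u v : ℕ) : cutRows n u v 1 = Ico (u - 1) (min v n) := by
  ext x
  simp only [cutRows, Equiv.Perm.coe_one, id_eq, Order.add_one_le_iff, mem_map, mem_filter,
    mem_univ, true_and, Fin.valEmbedding_apply, mem_Ico, tsub_le_iff_right, lt_inf_iff]
  constructor
  · rintro ⟨i, hi, rfl⟩
    omega
  · rintro ⟨hu, hv, hn⟩
    exact ⟨⟨x, hn⟩, ⟨hu, hv⟩, rfl⟩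

lemma twoSum_cutMat_one_le (n u v : ℕ) (π : Equiv.Perm (Fin n)) :
    twoSum (CutMat n u v) 1 ≤ twoSum (CutMat n u v) π := by
  rw [twoSum_cutMat, twoSum_cutMat, cutRows_one]
  exact sumSqDiff_Ico_le (by rw [card_cutRows, cutRows_one, Nat.card_Ico])

theorem identity_optimal_twoSum_of_cuts_general {n : ℕ}
    (A : Matrix (Fin n) (Fin n) ℝ)
    (hA : IsConicCombOfCuts A) (π : Equiv.Perm (Fin n)) :
    twoSum A π ≥ twoSum A (1 : Equiv.Perm (Fin n)) := by
  obtain ⟨s, c, hc, rfl⟩ := hA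
  rw [ge_iff_le, twoSum_sum_smul, twoSum_sum_smul]
  exact sum_le_sum fun p hp => mul_le_mul_of_nonneg_left (twoSum_cutMat_one_le n _ _ π) (hc p hp).1

/-- if the symmetric matrix `A` is a conic combination of cut matrices,
then the identity permutation is optimal for the 2-SUM problem on `A`. -/
theorem identity_optimal_twoSum_of_cuts {n : ℕ}
    (A : Matrix (Fin n) (Fin n) ℝ) (hAsym : ∀ i j, A i j = A j i)
    (hA : IsConicCombOfCuts A) (π : Equiv.Perm (Fin n)) :
    twoSum A π ≥ twoSum A (1 : Equiv.Perm (Fin n)) :=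
  identity_optimal_twoSum_of_cuts_general A hA π
end

section
/- Let A be an n×n Robinson similarity matrix. Then the identity permutation is optimal for the 2-SUM problem on A; that is, for every permutation π of [n], ∑_{i,j=1}^n A_{π(i)π(j)} (i−j)^2 ≥ ∑_{i,j=1}^n A_{ij} (i−j)^2. -/
/-! Since `d² = ∑_{t < d} (2t + 1)`, the 2-SUM objective is a positive combination, over the
thresholds `t`, of the total weight of the pairs placed more than `t` apart, so it suffices that
the identity minimises each of these weights. By a majorisation argument this reduces to
counting: every level set `U = {A ≥ s}` is closed under passing to sub-intervals, and for such
`U` no arrangement `σ` places fewer pairs of `U` more than `t` apart than the identity does.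

The count is proved by induction on `n`, removing the last index `n`. Deleting its position
`w = σ n` brings the other pairs at most one step closer, and the pairs lost this way are those
straddling `w` at distance exactly `t + 1`. They are paid for by the `U`-neighbours of `n`: those
within distance `t` of `w` sit in `2t` slots forming `t` chords of length `t + 1`, and every
chord holding two of them is such a straddling pair. -/

open Finset

theorem Finset.sum_le_sum_of_card_filter_le {ι M : Type*} [DecidableEq ι] [AddCommMonoid M]
    [LinearOrder M] [IsOrderedAddMonoid M] {φ : ι → M} {S T : Finset ι} (hcard : #S ≤ #T)
    (h : ∀ s, #{x ∈ T | s ≤ φ x} ≤ #{x ∈ S | s ≤ φ x}) : ∑ x ∈ T, φ x ≤ ∑ x ∈ S, φ x := by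
  induction T using Finset.induction_on_max_value φ generalizing S with
  | empty => simp_all
  | insert b T hbT hmax ih =>
    obtain ⟨a, haS, hba⟩ : ∃ a ∈ S, φ b ≤ φ a := by
      have hb : 0 < #{x ∈ insert b T | φ b ≤ φ x} := card_pos.2 ⟨b, by simp⟩
      obtain ⟨a, ha⟩ := card_pos.1 (hb.trans_le (h (φ b)))
      exact ⟨a, (mem_filter.1 ha).1, (mem_filter.1 ha).2⟩
    rw [sum_insert hbT, ← add_sum_erase S φ haS]
    refine add_le_add hba (ih ?_ fun s => ?_)
    · rw [card_erase_of_mem haS]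
      rw [card_insert_of_notMem hbT] at hcard
      omega
    by_cases hs : s ≤ φ b
    · have hT := h s
      rw [filter_insert, if_pos hs, card_insert_of_notMem (by simp [hbT])] at hT
      rw [filter_erase, card_erase_of_mem (mem_filter.2 ⟨haS, hs.trans hba⟩)]
      omega
    · rw [filter_false_of_mem fun x hx => not_le.2 ((hmax x hx).trans_lt (not_le.1 hs)),
        card_empty]
      exact Nat.zero_le _

def ltPairs (n : ℕ) : Finset (ℕ × ℕ) := {p ∈ range n ×ˢ range n | p.1 < p.2}

@[simp] theorem mem_ltPairs {n : ℕ} {p : ℕ × ℕ} : p ∈ ltPairs n ↔ p.1 < p.2 ∧ p.2 < n := by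
  simp only [ltPairs, mem_filter, mem_product, mem_range]
  omega

theorem sum_ltPairs_succ {M : Type*} [AddCommMonoid M] (f : ℕ × ℕ → M) (n : ℕ) :
    ∑ p ∈ ltPairs (n + 1), f p = ∑ p ∈ ltPairs n, f p + ∑ a ∈ range n, f (a, n) := by
  have hlt : ∀ a ∈ range n, (if a < n then f (a, n) else 0) = f (a, n) := fun a ha =>
    if_pos (mem_range.1 ha)
  have hgt : ∀ a ∈ range n, (if n < a then f (n, a) else 0) = 0 := fun a ha =>
    if_neg (mem_range.1 ha).asymm
  simp only [ltPairs, sum_filter, sum_product, sum_range_succ, lt_irrefl, if_false, add_zero,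
    sum_add_distrib, sum_congr rfl hlt, sum_congr rfl hgt, sum_const_zero]

theorem card_filter_ltPairs_succ (P : ℕ × ℕ → Prop) [DecidablePred P] (n : ℕ) :
    #{p ∈ ltPairs (n + 1) | P p} = #{p ∈ ltPairs n | P p} + #{a ∈ range n | P (a, n)} := by
  simp only [card_filter, sum_ltPairs_succ]

theorem sum_sum_range_eq_two_mul_sum_ltPairs {R : Type*} [NonAssocSemiring R] (G : ℕ → ℕ → R)
    (hsymm : ∀ a b, G a b = G b a) (hdiag : ∀ a, G a a = 0) (n : ℕ) :
    ∑ a ∈ range n, ∑ b ∈ range n, G a b = 2 * ∑ p ∈ ltPairs n, G p.1 p.2 := by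
  induction n with
  | zero => simp [ltPairs]
  | succ n ih =>
    simp only [sum_range_succ, sum_add_distrib, ih, sum_ltPairs_succ, hdiag, add_zero, mul_add]
    simp only [hsymm n, two_mul]
    abel

/-- For `α = Prop` this says that the relation `f` is closed under passing to sub-intervals. -/
def IsRobinsonOn {α : Type*} [Preorder α] (n : ℕ) (f : ℕ → ℕ → α) : Prop :=
  ∀ ⦃a a' b' b⦄, a ≤ a' → a' < b' → b' ≤ b → b < n → f a b ≤ f a' b'

def collapse (w x : ℕ) : ℕ := if x < w then x else x - 1

section Counting

variable {n t : ℕ} {U : ℕ → ℕ → Prop} [DecidableRel U] {σ : ℕ → ℕ}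

theorem card_filter_far_eq_collapse {w : ℕ} (hσ : ∀ a < n, σ a ≠ w) :
    #{p ∈ ltPairs n | U p.1 p.2 ∧ t < Nat.dist (σ p.1) (σ p.2)} =
      #{p ∈ ltPairs n | U p.1 p.2 ∧ t < Nat.dist (collapse w (σ p.1)) (collapse w (σ p.2))} +
      #{p ∈ ltPairs n | U p.1 p.2 ∧ min (σ p.1) (σ p.2) < w ∧ w < max (σ p.1) (σ p.2) ∧
        Nat.dist (σ p.1) (σ p.2) = t + 1} := by
  simp only [card_filter, ← sum_add_distrib]
  refine sum_congr rfl fun p hp => ?_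
  rw [mem_ltPairs] at hp
  have h₁ := hσ p.1 (by omega)
  have h₂ := hσ p.2 hp.2
  by_cases hUp : U p.1 p.2
  · simp only [hUp, true_and, collapse, Nat.dist]
    split_ifs <;> omega
  · simp only [hUp, false_and, if_false]

theorem card_filter_last_eq (hσ : ∀ a < n, σ a ≠ σ n) :
    #{a ∈ range n | U a n} = #{a ∈ range n | U a n ∧ t < Nat.dist (σ a) (σ n)} +
      #{a ∈ range n | U a n ∧ σ a < σ n ∧ σ n ≤ σ a + t} +
      #{a ∈ range n | U a n ∧ σ n < σ a ∧ σ a ≤ σ n + t} := by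
  simp only [card_filter, ← sum_add_distrib]
  refine sum_congr rfl fun a ha => ?_
  have := hσ a (mem_range.1 ha)
  by_cases hUa : U a n
  · simp only [hUa, true_and, Nat.dist]
    split_ifs <;> omega
  · simp only [hUa, false_and, if_false]

theorem card_near_last_le (hU : IsRobinsonOn (n + 1) U) (hσ : Set.InjOn σ (Set.Iio (n + 1))) :
    #{a ∈ range n | U a n ∧ σ a < σ n ∧ σ n ≤ σ a + t} +
      #{a ∈ range n | U a n ∧ σ n < σ a ∧ σ a ≤ σ n + t} ≤
      t + #{p ∈ ltPairs n | U p.1 p.2 ∧ min (σ p.1) (σ p.2) < σ n ∧ σ n < max (σ p.1) (σ p.2) ∧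
        Nat.dist (σ p.1) (σ p.2) = t + 1} := by
  have hinj : ∀ a < n + 1, ∀ b < n + 1, σ a = σ b → a = b := fun a ha b hb h => hσ ha hb h
  set L := {a ∈ range n | U a n ∧ σ a < σ n ∧ σ n ≤ σ a + t}
  set R := {a ∈ range n | U a n ∧ σ n < σ a ∧ σ a ≤ σ n + t}
  -- the slots `σ n - d` and `σ n + (t + 1 - d)` share the chord index `d - 1`
  set cL := fun a => σ n - σ a - 1
  set cR := fun a => t + σ n - σ a
  have hL : #(L.image cL) = #L := card_image_of_injOn fun a ha b hb hab => by
    rw [mem_coe, mem_filter, mem_range] at ha hb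
    exact hinj a (by omega) b (by omega) (by simp only [cL] at hab; omega)
  have hR : #(R.image cR) = #R := card_image_of_injOn fun a ha b hb hab => by
    rw [mem_coe, mem_filter, mem_range] at ha hb
    exact hinj a (by omega) b (by omega) (by simp only [cR] at hab; omega)
  have hunion : L.image cL ∪ R.image cR ⊆ range t := by
    intro k hk
    simp only [mem_union, mem_image, L, R, mem_filter, mem_range, cL, cR] at hk
    rw [mem_range]
    omega
  have hinter : L.image cL ∩ R.image cR ⊆ {p ∈ ltPairs n | U p.1 p.2 ∧
      min (σ p.1) (σ p.2) < σ n ∧ σ n < max (σ p.1) (σ p.2) ∧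
      Nat.dist (σ p.1) (σ p.2) = t + 1}.image fun p => σ n - min (σ p.1) (σ p.2) - 1 := by
    intro k hk
    simp only [mem_inter, mem_image, L, R, mem_filter, mem_range, cL, cR] at hk
    obtain ⟨⟨a, ⟨ha, hUa, ha₁, ha₂⟩, rfl⟩, ⟨b, ⟨hb, hUb, hb₁, hb₂⟩, hab⟩⟩ := hk
    have hne : a ≠ b := by rintro rfl; omega
    rcases hne.lt_or_gt with h | h
    · refine mem_image.2 ⟨(a, b), mem_filter.2 ⟨mem_ltPairs.2 ⟨h, hb⟩, ?_, ?_⟩, ?_⟩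
      · exact hU le_rfl h hb.le n.lt_succ_self hUa
      · simp only [Nat.dist]; omega
      · simp only; omega
    · refine mem_image.2 ⟨(b, a), mem_filter.2 ⟨mem_ltPairs.2 ⟨h, ha⟩, ?_, ?_⟩, ?_⟩
      · exact hU le_rfl h ha.le n.lt_succ_self hUb
      · simp only [Nat.dist]; omega
      · simp only; omega
  calc #L + #R = #(L.image cL ∪ R.image cR) + #(L.image cL ∩ R.image cR) := by
        rw [card_union_add_card_inter, hL, hR]
    _ ≤ _ := add_le_add ((card_le_card hunion).trans (card_range t).le)
        ((card_le_card hinter).trans card_image_le)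

theorem card_far_last_id_add_le_or_eq_zero (hU : IsRobinsonOn (n + 1) U) :
    #{a ∈ range n | U a n ∧ t < Nat.dist a n} + t ≤ #{a ∈ range n | U a n} ∨
      #{a ∈ range n | U a n ∧ t < Nat.dist a n} = 0 := by
  rw [or_iff_not_imp_right, ← Ne, ← pos_iff_ne_zero, card_pos]
  rintro ⟨a₀, ha₀⟩
  rw [mem_filter, mem_range, Nat.dist] at ha₀
  have hsub : Ico (n - t) n ⊆ {a ∈ {a ∈ range n | U a n} | ¬ t < Nat.dist a n} := by
    intro a ha
    rw [mem_Ico] at ha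
    rw [mem_filter, mem_filter, mem_range, Nat.dist]
    exact ⟨⟨ha.2, hU (by omega) (by omega) le_rfl n.lt_succ_self ha₀.2.1⟩, by omega⟩
  calc _ = #{a ∈ {a ∈ range n | U a n} | t < Nat.dist a n} + #(Ico (n - t) n) := by
        rw [filter_filter, Nat.card_Ico]; omega
    _ ≤ _ := Nat.add_le_add_left (card_le_card hsub) _
    _ = _ := card_filter_add_card_filter_not _

theorem card_filter_far_id_le (hU : IsRobinsonOn n U) (hσ : Set.InjOn σ (Set.Iio n)) :
    #{p ∈ ltPairs n | U p.1 p.2 ∧ t < Nat.dist p.1 p.2} ≤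
      #{p ∈ ltPairs n | U p.1 p.2 ∧ t < Nat.dist (σ p.1) (σ p.2)} := by
  induction n generalizing σ with
  | zero => simp [ltPairs]
  | succ n ih =>
    have hne : ∀ a < n, σ a ≠ σ n := fun a ha h =>
      ha.ne (hσ (Set.mem_Iio.2 (by omega)) (Set.mem_Iio.2 n.lt_succ_self) h)
    have hcollapse : Set.InjOn (collapse (σ n) ∘ σ) (Set.Iio n) := fun a ha b hb hab => by
      rw [Set.mem_Iio] at ha hb
      have := hne a ha
      have := hne b hb
      simp only [Function.comp, collapse] at hab
      exact hσ (Set.mem_Iio.2 (by omega)) (Set.mem_Iio.2 (by omega))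
        (by split_ifs at hab <;> omega)
    have hIH := ih (fun _ _ _ _ h₁ h₂ h₃ h₄ => hU h₁ h₂ h₃ (h₄.trans n.lt_succ_self)) hcollapse
    rw [card_filter_ltPairs_succ, card_filter_ltPairs_succ, card_filter_far_eq_collapse hne]
    simp only [Function.comp] at hIH ⊢
    have := card_filter_last_eq (U := U) (t := t) hne
    have := card_near_last_le (t := t) hU hσ
    have := card_far_last_id_add_le_or_eq_zero (t := t) hU
    omega

theorem card_filter_far_le_id (hmaps : Set.MapsTo σ (Set.Iio n) (Set.Iio n))
    (hσ : Set.InjOn σ (Set.Iio n)) :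
    #{p ∈ ltPairs n | t < Nat.dist (σ p.1) (σ p.2)} ≤ #{p ∈ ltPairs n | t < Nat.dist p.1 p.2} := by
  have hinj : ∀ a < n, ∀ b < n, σ a = σ b → a = b := fun a ha b hb h => hσ ha hb h
  refine card_le_card_of_injOn (fun p => (min (σ p.1) (σ p.2), max (σ p.1) (σ p.2)))
    (fun p hp => ?_) fun p hp q hq hpq => ?_
  · rw [mem_coe, mem_filter, mem_ltPairs] at hp
    have h₁ : σ p.1 < n := hmaps (Set.mem_Iio.2 (by omega))
    have h₂ : σ p.2 < n := hmaps (Set.mem_Iio.2 hp.1.2)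
    have hne : σ p.1 ≠ σ p.2 := fun h => hp.1.1.ne (hinj _ (by omega) _ hp.1.2 h)
    rw [mem_coe, mem_filter, mem_ltPairs]
    simp only [Nat.dist] at hp ⊢
    omega
  · rw [mem_coe, mem_filter, mem_ltPairs] at hp hq
    simp only [Prod.mk.injEq] at hpq
    have h₁ := hinj p.1 (by omega) q.1 (by omega)
    have h₂ := hinj p.2 (by omega) q.2 (by omega)
    have h₃ := hinj p.1 (by omega) q.2 (by omega)
    have h₄ := hinj p.2 (by omega) q.1 (by omega)
    ext <;> omega

end Counting

theorem sum_range_two_mul_add_one (d : ℕ) : ∑ t ∈ range d, (2 * t + 1 : ℝ) = d ^ 2 := by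
  induction d with
  | zero => simp
  | succ d ih => rw [sum_range_succ, ih]; push_cast; ring

theorem sum_mul_sq_dist_eq_sum_far {n : ℕ} (A : ℕ → ℕ → ℝ) (σ : ℕ → ℕ)
    (hd : ∀ p ∈ ltPairs n, Nat.dist (σ p.1) (σ p.2) ≤ n) :
    ∑ p ∈ ltPairs n, A p.1 p.2 * (Nat.dist (σ p.1) (σ p.2) : ℝ) ^ 2 =
      ∑ t ∈ range n, (2 * t + 1) *
        ∑ p ∈ ltPairs n with t < Nat.dist (σ p.1) (σ p.2), A p.1 p.2 := by
  simp_rw [mul_sum, sum_filter]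
  rw [sum_comm]
  refine sum_congr rfl fun p hp => ?_
  have hrange : {t ∈ range n | t < Nat.dist (σ p.1) (σ p.2)} =
      range (Nat.dist (σ p.1) (σ p.2)) := by
    ext t
    have := hd p hp
    simp only [mem_filter, mem_range]
    omega
  rw [← sum_range_two_mul_add_one, ← hrange, sum_filter, mul_sum]
  refine sum_congr rfl fun t _ => ?_
  split_ifs <;> ring

section Weighted

variable {n : ℕ} {A : ℕ → ℕ → ℝ} {σ : ℕ → ℕ}

theorem sum_filter_far_id_le (hA : IsRobinsonOn n A)
    (hmaps : Set.MapsTo σ (Set.Iio n) (Set.Iio n)) (hσ : Set.InjOn σ (Set.Iio n)) (t : ℕ) :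
    ∑ p ∈ ltPairs n with t < Nat.dist p.1 p.2, A p.1 p.2 ≤
      ∑ p ∈ ltPairs n with t < Nat.dist (σ p.1) (σ p.2), A p.1 p.2 := by
  refine sum_le_sum_of_card_filter_le (card_filter_far_le_id hmaps hσ) fun s => ?_
  rw [filter_filter, filter_filter]
  simpa only [and_comm] using card_filter_far_id_le (t := t)
    (U := fun a b => s ≤ A a b) (fun _ _ _ _ h₁ h₂ h₃ h₄ hs => hs.trans (hA h₁ h₂ h₃ h₄)) hσ

theorem sum_mul_sq_dist_id_le (hA : IsRobinsonOn n A)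
    (hmaps : Set.MapsTo σ (Set.Iio n) (Set.Iio n)) (hσ : Set.InjOn σ (Set.Iio n)) :
    ∑ p ∈ ltPairs n, A p.1 p.2 * (Nat.dist p.1 p.2 : ℝ) ^ 2 ≤
      ∑ p ∈ ltPairs n, A p.1 p.2 * (Nat.dist (σ p.1) (σ p.2) : ℝ) ^ 2 := by
  have hid : ∀ p ∈ ltPairs n, Nat.dist (id p.1) (id p.2) ≤ n := fun p hp => by
    rw [mem_ltPairs] at hp
    simp only [id, Nat.dist]
    omega
  have hσd : ∀ p ∈ ltPairs n, Nat.dist (σ p.1) (σ p.2) ≤ n := fun p hp => by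
    rw [mem_ltPairs] at hp
    have h₁ : σ p.1 < n := hmaps (Set.mem_Iio.2 (by omega))
    have h₂ : σ p.2 < n := hmaps (Set.mem_Iio.2 hp.2)
    simp only [Nat.dist]
    omega
  refine (sum_mul_sq_dist_eq_sum_far A id hid).trans_le ?_
  rw [sum_mul_sq_dist_eq_sum_far A σ hσd]
  exact sum_le_sum fun t _ =>
    mul_le_mul_of_nonneg_left (sum_filter_far_id_le hA hmaps hσ t) (by positivity)

end Weighted

theorem Nat.cast_dist_sq (x y : ℕ) : (Nat.dist x y : ℝ) ^ 2 = ((x : ℝ) - y) ^ 2 := by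
  rcases le_total x y with h | h
  · rw [Nat.dist_eq_sub_of_le h, Nat.cast_sub h]; ring
  · rw [Nat.dist_eq_sub_of_le_right h, Nat.cast_sub h]

def natEntry {n : ℕ} (A : Matrix (Fin n) (Fin n) ℝ) (a b : ℕ) : ℝ :=
  if h : a < n ∧ b < n then A ⟨a, h.1⟩ ⟨b, h.2⟩ else 0

theorem isRobinsonOn_natEntry {n : ℕ} {A : Matrix (Fin n) (Fin n) ℝ} (hA : IsRobinsonSim A) :
    IsRobinsonOn n (natEntry A) := by
  intro a a' b' b h₁ h₂ h₃ h₄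
  simp only [natEntry, dif_pos (⟨by omega, h₄⟩ : a < n ∧ b < n),
    dif_pos (⟨by omega, by omega⟩ : a' < n ∧ b' < n)]
  calc A ⟨a, _⟩ ⟨b, h₄⟩ ≤ A ⟨a', _⟩ ⟨b, h₄⟩ :=
        (hA.2 _ _ _ (Fin.mk_le_mk.2 h₁) (Fin.mk_le_mk.2 (by omega))).trans (min_le_right _ _)
    _ ≤ A ⟨a', _⟩ ⟨b', _⟩ :=
        (hA.2 _ _ _ (Fin.mk_le_mk.2 (by omega)) (Fin.mk_le_mk.2 h₃)).trans (min_le_left _ _)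

theorem natEntry_comm {n : ℕ} {A : Matrix (Fin n) (Fin n) ℝ} (hA : ∀ i j, A i j = A j i)
    (a b : ℕ) : natEntry A a b = natEntry A b a := by
  unfold natEntry
  by_cases h : a < n ∧ b < n
  · rw [dif_pos h, dif_pos h.symm, hA]
  · rw [dif_neg h, dif_neg (mt And.symm h)]

theorem extendDomain_finEquivSubtype_apply {n : ℕ} (π : Equiv.Perm (Fin n)) (u : Fin n) :
    π.extendDomain Fin.equivSubtype u = π u := by
  simpa using π.extendDomain_apply_image Fin.equivSubtype u

theorem mapsTo_extendDomain_finEquivSubtype {n : ℕ} (π : Equiv.Perm (Fin n)) :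
    Set.MapsTo (π.extendDomain Fin.equivSubtype) (Set.Iio n) (Set.Iio n) := by
  intro a ha
  lift a to Fin n using ha
  simp [extendDomain_finEquivSubtype_apply]

theorem twoSum_eq_two_mul_sum_ltPairs {n : ℕ} {A : Matrix (Fin n) (Fin n) ℝ}
    (hA : ∀ i j, A i j = A j i) (π : Equiv.Perm (Fin n)) :
    twoSum A π = 2 * ∑ p ∈ ltPairs n, natEntry A p.1 p.2 *
      (Nat.dist (π⁻¹.extendDomain Fin.equivSubtype p.1)
        (π⁻¹.extendDomain Fin.equivSubtype p.2) : ℝ) ^ 2 := by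
  set σ := π⁻¹.extendDomain Fin.equivSubtype
  have hreindex : twoSum A π = ∑ u, ∑ v, A u v * ((π⁻¹ u : ℕ) - (π⁻¹ v : ℕ) : ℝ) ^ 2 :=
    Fintype.sum_equiv π _ _ fun i => Fintype.sum_equiv π _ _ fun j => by simp
  rw [hreindex, ← sum_sum_range_eq_two_mul_sum_ltPairs
    (fun a b => natEntry A a b * (Nat.dist (σ a) (σ b) : ℝ) ^ 2)
    (fun a b => by rw [natEntry_comm hA, Nat.dist_comm]) (fun a => by simp),
    ← Fin.sum_univ_eq_sum_range]
  refine sum_congr rfl fun u _ => ?_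
  rw [← Fin.sum_univ_eq_sum_range]
  refine sum_congr rfl fun v _ => ?_
  simp [σ, natEntry, extendDomain_finEquivSubtype_apply, Nat.cast_dist_sq]

/-- if `A` is a Robinson similarity matrix, then the identity
permutation is optimal for the 2-SUM problem on `A`. -/
theorem identity_optimal_twoSum_robinson {n : ℕ}
    (A : Matrix (Fin n) (Fin n) ℝ) (hA : IsRobinsonSim A) (π : Equiv.Perm (Fin n)) :
    twoSum A π ≥ twoSum A (1 : Equiv.Perm (Fin n)) := by
  rw [ge_iff_le, twoSum_eq_two_mul_sum_ltPairs hA.1, twoSum_eq_two_mul_sum_ltPairs hA.1]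
  gcongr 2 * ?_
  simpa using sum_mul_sq_dist_id_le (isRobinsonOn_natEntry hA)
    (mapsTo_extendDomain_finEquivSubtype π⁻¹) (Equiv.injective _).injOn
end

section
/- Let n ≥ 2, let Δ be an integer with 1 ≤ Δ ≤ n−1, let k ∈ [n], and let F ⊆ E^Δ_n with complement R = E^Δ_n \ F. Assume: (C1) |F| = Δ; (C4) no pair in R contains the element k; and (C5) no diagonal pair {i, n−Δ+i} with k+1−n+Δ ≤ i ≤ k−1 and 1 ≤ i ≤ Δ belongs to R. Let τ be the cyclic permutation of [n] defined by τ(i) = i for i < k, τ(i) = i+1 for k ≤ i ≤ n−1, and τ(n) = k. Then R = τ(E^{Δ−1}_{n−1}) := {{τ(i), τ(j)} : {i,j} ∈ E^{Δ−1}_{n−1}}. -/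
/-!
Every pair of `R ⊆ E^Δ_n` avoids `k`, so it has a preimage under `τ`, namely the pair
obtained by lowering each entry above `k` by one; this preimage lies in `E^{Δ-1}_{n-1}`,
the only obstruction being a diagonal pair straddling `k`, which (C5) excludes. Hence `R` is
contained in `τ(E^{Δ-1}_{n-1})`. Conversely `E^Δ_n` is `E^{Δ-1}_{n-1}` together with the `Δ`
pairs `{i, n}`, so by (C1) `|R| = |E^{Δ-1}_{n-1}| ≥ |τ(E^{Δ-1}_{n-1})|`, forcing equality.
-/

/-- The set `E^Δ_n = {{i, n - Δ + j} : 1 ≤ i ≤ j ≤ Δ}` of unordered pairs of elements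
of `[n] = {1,…,n}`. Since `i ≤ Δ < n - Δ + j` for every such pair, each unordered pair
is represented canonically by the ordered pair whose first coordinate is the smaller
element. -/
def EDeltaPairs (n Δ : ℕ) : Finset (ℕ × ℕ) :=
  ((Finset.Icc 1 Δ ×ˢ Finset.Icc 1 Δ).filter (fun p => p.1 ≤ p.2)).image
    (fun p => (p.1, n - Δ + p.2))

open Finset

lemma mem_EDeltaPairs {n Δ : ℕ} {p : ℕ × ℕ} :
    p ∈ EDeltaPairs n Δ ↔ ∃ i j, 1 ≤ i ∧ i ≤ j ∧ j ≤ Δ ∧ p = (i, n - Δ + j) := by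
  simp only [EDeltaPairs, mem_image, mem_filter, mem_product, mem_Icc, Prod.exists]
  constructor
  · rintro ⟨i, j, ⟨⟨⟨hi, -⟩, -, hj⟩, hij⟩, rfl⟩
    exact ⟨i, j, hi, hij, hj, rfl⟩
  · rintro ⟨i, j, hi, hij, hj, rfl⟩
    exact ⟨i, j, ⟨⟨⟨hi, hij.trans hj⟩, hi.trans hij, hj⟩, hij⟩, rfl⟩

lemma EDeltaPairs_eq_union {n Δ : ℕ} (hΔ : 1 ≤ Δ) (hΔn : Δ ≤ n) :
    EDeltaPairs n Δ = EDeltaPairs (n - 1) (Δ - 1) ∪ (Icc 1 Δ).image (fun i => (i, n)) := by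
  ext p
  simp only [mem_union, mem_EDeltaPairs, mem_image, mem_Icc]
  constructor
  · rintro ⟨i, j, hi, hij, hj, rfl⟩
    rcases hj.lt_or_eq with hj | rfl
    · exact Or.inl ⟨i, j, hi, hij, by omega, by ext <;> simp only; omega⟩
    · exact Or.inr ⟨i, ⟨hi, hij⟩, by ext <;> simp only; omega⟩
  · rintro (⟨i, j, hi, hij, hj, rfl⟩ | ⟨i, ⟨hi, hiΔ⟩, rfl⟩)
    · exact ⟨i, j, hi, hij, by omega, by ext <;> simp only; omega⟩
    · exact ⟨i, Δ, hi, hiΔ, le_rfl, by ext <;> simp only; omega⟩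

lemma card_EDeltaPairs_eq_card_pred_add {n Δ : ℕ} (hΔ : 1 ≤ Δ) (hΔn : Δ ≤ n) :
    #(EDeltaPairs n Δ) = #(EDeltaPairs (n - 1) (Δ - 1)) + Δ := by
  have hdisj : Disjoint (EDeltaPairs (n - 1) (Δ - 1)) ((Icc 1 Δ).image (fun i => (i, n))) := by
    simp only [disjoint_left, mem_EDeltaPairs, mem_image, not_exists, not_and]
    rintro _ ⟨i, j, -, -, hj, rfl⟩ l - h
    simp only [Prod.mk.injEq] at h
    omega
  rw [EDeltaPairs_eq_union hΔ hΔn, card_union_of_disjoint hdisj,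
    card_image_of_injective _ (fun _ _ h => (Prod.ext_iff.mp h).1), Nat.card_Icc,
    Nat.add_sub_cancel]

section Cycle

variable {n Δ k : ℕ} {τ : ℕ → ℕ} (hτ1 : ∀ i, i < k → τ i = i)
  (hτ2 : ∀ i, k ≤ i → i ≤ n - 1 → τ i = i + 1)
include hτ1 hτ2

lemma cycle_apply_ite_of_ne {x : ℕ} (hxk : x ≠ k) (hxn : x ≤ n) :
    τ (if x < k then x else x - 1) = x := by
  split_ifs with h
  · exact hτ1 x h
  · rw [hτ2 _ (by omega) (by omega)]
    omega

lemma mem_image_cycle_of_ne {i j : ℕ} (hk : 1 ≤ k) (hkn : k ≤ n) (hΔn : Δ ≤ n) (hi : 1 ≤ i)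
    (hij : i ≤ j) (hj : j ≤ Δ) (hik : i ≠ k) (hjk : n - Δ + j ≠ k)
    (hcross : i < k → k < n - Δ + j → i < j) :
    (i, n - Δ + j) ∈ (EDeltaPairs (n - 1) (Δ - 1)).image
      (fun p => (min (τ p.1) (τ p.2), max (τ p.1) (τ p.2))) := by
  rw [mem_image]
  refine ⟨(if i < k then i else i - 1, if n - Δ + j < k then n - Δ + j else n - Δ + j - 1),
    ?_, ?_⟩
  · refine mem_EDeltaPairs.mpr ⟨_, if n - Δ + j < k then j else j - 1, ?_, ?_, ?_,
      Prod.ext rfl ?_⟩ <;> split_ifs <;> omega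
  · simp only [cycle_apply_ite_of_ne hτ1 hτ2 hik (by omega),
      cycle_apply_ite_of_ne hτ1 hτ2 hjk (by omega)]
    ext <;> simp only <;> omega

end Cycle

theorem claim2_R_eq_tau_image_general {n Δ k : ℕ}
    (hΔ1 : 1 ≤ Δ) (hΔ2 : Δ ≤ n - 1) (hk1 : 1 ≤ k) (hk2 : k ≤ n)
    (F R : Finset (ℕ × ℕ)) (hF : F ⊆ EDeltaPairs n Δ) (hR : R = EDeltaPairs n Δ \ F)
    (hC1 : F.card = Δ)
    (hC4 : ∀ p ∈ R, p.1 ≠ k ∧ p.2 ≠ k)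
    (hC5 : ∀ i, 1 ≤ i → i ≤ Δ → k + 1 + Δ ≤ n + i → i + 1 ≤ k →
      (i, n - Δ + i) ∉ R)
    (τ : ℕ → ℕ)
    (hτ1 : ∀ i, i < k → τ i = i)
    (hτ2 : ∀ i, k ≤ i → i ≤ n - 1 → τ i = i + 1) :
    R = (EDeltaPairs (n - 1) (Δ - 1)).image
      (fun p => (min (τ p.1) (τ p.2), max (τ p.1) (τ p.2))) := by
  have hsub : R ⊆ (EDeltaPairs (n - 1) (Δ - 1)).image
      (fun p => (min (τ p.1) (τ p.2), max (τ p.1) (τ p.2))) := by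
    intro p hp
    obtain ⟨i, j, hi, hij, hj, rfl⟩ := mem_EDeltaPairs.mp ((hR ▸ sdiff_subset) hp)
    refine mem_image_cycle_of_ne hτ1 hτ2 hk1 hk2 (by omega) hi hij hj (hC4 _ hp).1 (hC4 _ hp).2
      fun hik hkj => hij.lt_of_ne ?_
    rintro rfl
    exact hC5 i hi hj (by omega) (by omega) hp
  refine eq_of_subset_of_card_le hsub ?_
  calc #((EDeltaPairs (n - 1) (Δ - 1)).image _)
      ≤ #(EDeltaPairs (n - 1) (Δ - 1)) := card_image_le
    _ = #(EDeltaPairs n Δ) - #F := by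
      rw [card_EDeltaPairs_eq_card_pred_add hΔ1 (by omega), hC1, Nat.add_sub_cancel]
    _ = #R := by rw [hR, card_sdiff_of_subset hF]

/-- Claim 2: let `2 ≤ n`, `1 ≤ Δ ≤ n - 1`, `k ∈ [n]`, `F ⊆ E^Δ_n` and
`R = E^Δ_n \ F`. Assume (C1) `|F| = Δ`; (C4) no pair in `R` contains `k`; (C5) no
diagonal pair `{i, n - Δ + i}` with `k + 1 - n + Δ ≤ i ≤ k - 1` (and `1 ≤ i ≤ Δ`) lies
in `R`. Let `τ = (k, k+1, …, n)` be the cycle with `τ i = i` for `i < k`,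
`τ i = i + 1` for `k ≤ i ≤ n - 1` and `τ n = k`. Then `R = τ(E^{Δ-1}_{n-1})`
(unordered pairs; the canonical representative of `{τ i, τ j}` is
`(min (τ i) (τ j), max (τ i) (τ j))`). -/
theorem claim2_R_eq_tau_image {n Δ k : ℕ} (hn : 2 ≤ n)
    (hΔ1 : 1 ≤ Δ) (hΔ2 : Δ ≤ n - 1) (hk1 : 1 ≤ k) (hk2 : k ≤ n)
    (F R : Finset (ℕ × ℕ)) (hF : F ⊆ EDeltaPairs n Δ) (hR : R = EDeltaPairs n Δ \ F)
    (hC1 : F.card = Δ)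
    (hC4 : ∀ p ∈ R, p.1 ≠ k ∧ p.2 ≠ k)
    (hC5 : ∀ i, 1 ≤ i → i ≤ Δ → k + 1 + Δ ≤ n + i → i + 1 ≤ k →
      (i, n - Δ + i) ∉ R)
    (τ : ℕ → ℕ)
    (hτ1 : ∀ i, i < k → τ i = i)
    (hτ2 : ∀ i, k ≤ i → i ≤ n - 1 → τ i = i + 1)
    (hτ3 : τ n = k) :
    R = (EDeltaPairs (n - 1) (Δ - 1)).image
      (fun p => (min (τ p.1) (τ p.2), max (τ p.1) (τ p.2))) :=
  claim2_R_eq_tau_image_general hΔ1 hΔ2 hk1 hk2 F R hF hR hC1 hC4 hC5 τ hτ1 hτ2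
end
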